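/- Let 𝕄 = (M,𝒞) be a countable transitive model of GB⁻ and let ℙ be a notion of class forcing for 𝕄. Suppose ℙ satisfies the definability lemma for 'v₀ ∈ v₁' or for 'v₀ = v₁' over 𝕄. Then ℙ satisfies the forcing theorem for all atomic ∈-formulae over 𝕄, and furthermore ℙ satisfies the forcing theorem over 𝕄 for every formula of each language L^n, the language of set theory with n additional unary predicate symbols interpreted by evaluations Γ₀^G,…,Γ_{n−1}^G of class ℙ-names Γᵢ ∈ 𝒞^ℙ. -/

import Mathlib

set_option autoImplicit false

attribute [local instance] Classical.propDecidable

namespace CF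

/-- First-order formulas of the language of set theory with `κ` class-predicate
variables (the languages `L^κ`) and `n` free set variables; `κ = 0` gives the
pure ∈-formulas. There is no class quantification. -/
inductive CFml : ℕ → ℕ → Type
  | mem {κ n : ℕ} (i j : Fin n) : CFml κ n
  | eq {κ n : ℕ} (i j : Fin n) : CFml κ n
  | cls {κ n : ℕ} (X : Fin κ) (i : Fin n) : CFml κ n
  | not {κ n : ℕ} : CFml κ n → CFml κ n
  | or {κ n : ℕ} : CFml κ n → CFml κ n → CFml κ n
  | ex {κ n : ℕ} : CFml κ (n + 1) → CFml κ n

/-- Satisfaction of such a formula in the structure whose domain is the class `D`,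
with class predicates interpreted by `Γ` and variable assignment `v`. -/
def SatC (D : Set ZFSet) : ∀ {κ n : ℕ}, (Fin κ → Set ZFSet) → CFml κ n → (Fin n → ZFSet) → Prop
  | _, _, _, .mem i j, v => v i ∈ v j
  | _, _, _, .eq i j, v => v i = v j
  | _, _, Γ, .cls X i, v => v i ∈ Γ X
  | _, _, Γ, .not φ, v => ¬ SatC D Γ φ v
  | _, _, Γ, .or φ ψ, v => SatC D Γ φ v ∨ SatC D Γ ψ v
  | _, _, Γ, .ex φ, v => ∃ x ∈ D, SatC D Γ φ (Fin.snoc v x)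

/-- Pure ∈-formulas with `n` free variables. -/
abbrev Fml (n : ℕ) : Type := CFml 0 n

/-- Satisfaction of an ∈-formula in `(M, ∈)` (quantifiers relativized to `M`). -/
def Sat (M : ZFSet) {n : ℕ} (φ : Fml n) (v : Fin n → ZFSet) : Prop :=
  SatC M.toSet (fun i => i.elim0) φ v

/-- A `k`-ary relation on `M` is definable (with parameters) over `(M, ∈)`. -/
def DefinableOver (M : ZFSet) {k : ℕ} (S : (Fin k → ZFSet) → Prop) : Prop :=
  ∃ (m : ℕ) (φ : Fml (k + m)) (a : Fin m → ZFSet), (∀ i, a i ∈ M) ∧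
    ∀ v : Fin k → ZFSet, (∀ i, v i ∈ M) → (S v ↔ Sat M φ (Fin.append v a))

/-- The collection of classes of `M` that are definable over `(M,∈)` with parameters. -/
def DefClasses (M : ZFSet) : Set (Set ZFSet) :=
  {S | S ⊆ M.toSet ∧ DefinableOver M (fun v : Fin 1 → ZFSet => v 0 ∈ S)}

/-- `M` is a countable transitive model of `ZF⁻` (`ZF` without the power set axiom,
with Collection instead of Replacement), stated semantically via
the closure conditions that satisfaction of the `ZF⁻`-axioms imposes on a
transitive set (Foundation is automatic for transitive sets). -/
structure IsCTM (M : ZFSet) : Prop where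
  countable : M.toSet.Countable
  transitive : M.IsTransitive
  empty_mem : (∅ : ZFSet) ∈ M
  pairing : ∀ x ∈ M, ∀ y ∈ M, ({x, y} : ZFSet) ∈ M
  union : ∀ x ∈ M, (ZFSet.sUnion x : ZFSet) ∈ M
  infinity : ZFSet.omega ∈ M
  separation : ∀ (m : ℕ) (φ : Fml (m + 1)) (a : Fin m → ZFSet), (∀ i, a i ∈ M) →
    ∀ x ∈ M, ZFSet.sep (fun y => Sat M φ (Fin.snoc a y)) x ∈ M
  collection : ∀ (m : ℕ) (φ : Fml (m + 2)) (a : Fin m → ZFSet), (∀ i, a i ∈ M) →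
    ∀ x ∈ M, (∀ y ∈ x, ∃ z ∈ M, Sat M φ (Fin.snoc (Fin.snoc a y) z)) →
      ∃ b ∈ M, ∀ y ∈ x, ∃ z ∈ b, Sat M φ (Fin.snoc (Fin.snoc a y) z)

/-- `x` is a (von Neumann) ordinal. -/
def IsOrdZ (x : ZFSet) : Prop := x.IsTransitive ∧ ∀ y ∈ x, ZFSet.IsTransitive y

/-- `α` is an ordinal of the model `M`. -/
def IsOrdIn (M α : ZFSet) : Prop := α ∈ M ∧ IsOrdZ α
/-- A notion of (class) forcing for `(M, C)`: a preorder whose domain and order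
relation are classes in `C` and whose conditions are elements of `M`, with a
maximal element `one`. For the first-order setting of a partial order definable
over a model `M` of `ZF⁻`, take `C = DefClasses M`. -/
structure ClassForcing (M : ZFSet) (C : Set (Set ZFSet)) where
  P : Set ZFSet
  le : ZFSet → ZFSet → Prop
  P_subM : ∀ p ∈ P, p ∈ M
  P_mem : P ∈ C
  le_mem : {x : ZFSet | ∃ p ∈ P, ∃ q ∈ P, le p q ∧ x = ZFSet.pair p q} ∈ C
  le_refl : ∀ p ∈ P, le p p
  le_trans : ∀ p ∈ P, ∀ q ∈ P, ∀ r ∈ P, le p q → le q r → le p r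
  one : ZFSet
  one_mem : one ∈ P
  le_one : ∀ p ∈ P, le p one

variable {M : ZFSet} {C : Set (Set ZFSet)}

/-- `p` and `q` are compatible in `F`. -/
def Compat (F : ClassForcing M C) (p q : ZFSet) : Prop :=
  ∃ r ∈ F.P, F.le r p ∧ F.le r q

/-- `F` is antisymmetric, i.e. an actual partial order. -/
def Antisymmetric (F : ClassForcing M C) : Prop :=
  ∀ p ∈ F.P, ∀ q ∈ F.P, F.le p q → F.le q p → p = q

/-- `F` is separative. -/
def Separative (F : ClassForcing M C) : Prop :=
  ∀ p ∈ F.P, ∀ q ∈ F.P, ¬ F.le p q → ∃ r ∈ F.P, F.le r p ∧ ¬ Compat F r q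

/-- `σ` is a `P`-name: every element of `σ` is a pair `⟨τ, p⟩` where `τ` is a
`P`-name and `p ∈ P`. -/
inductive IsName (P : Set ZFSet) : ZFSet → Prop
  | intro (σ : ZFSet)
      (hshape : ∀ x ∈ σ, ∃ τ p, p ∈ P ∧ x = ZFSet.pair τ p)
      (hrec : ∀ τ p : ZFSet, ZFSet.pair τ p ∈ σ → IsName P τ) : IsName P σ

theorem transGen_mem_of_pair_mem {τ p σ : ZFSet} (h : ZFSet.pair τ p ∈ σ) :
    Relation.TransGen (· ∈ ·) τ σ := by
  have h1 : τ ∈ ({τ, p} : ZFSet) := by simp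
  have h2 : ({τ, p} : ZFSet) ∈ ZFSet.pair τ p := by simp [ZFSet.pair]
  exact Relation.TransGen.tail (Relation.TransGen.tail (Relation.TransGen.single h1) h2) h

/-- The evaluation `σ^G = {τ^G ∣ ∃ p ∈ G, ⟨τ,p⟩ ∈ σ}` of a name by a filter `G`
(defined by recursion on the transitive closure of `∈`; note that any `τ` with
`⟨τ,p⟩ ∈ σ` satisfies `τ ∈ ⋃₀ ⋃₀ σ`). -/
noncomputable def val (G : Set ZFSet) : ZFSet → ZFSet :=
  WellFounded.fix (ZFSet.mem_wf.transGen) fun σ ih =>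
    @ZFSet.image
      (fun τ => if h : Relation.TransGen (· ∈ ·) τ σ then ih τ h else ∅)
      (Classical.allZFSetDefinable _)
      (ZFSet.sep (fun τ => ∃ p ∈ G, ZFSet.pair τ p ∈ σ) (ZFSet.sUnion (ZFSet.sUnion σ : ZFSet) : ZFSet))

/-- `D` is dense in the forcing `(P, ≤)`. -/
def DenseIn (P : Set ZFSet) (le : ZFSet → ZFSet → Prop) (D : Set ZFSet) : Prop :=
  ∀ p ∈ P, ∃ q ∈ D, q ∈ P ∧ le q p

/-- `G` is a filter on `(P, ≤)` which is generic over `(M, C)`, i.e. it meets every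
dense subclass of `P` lying in `C`. -/
structure IsGenericRaw (M : ZFSet) (C : Set (Set ZFSet)) (P : Set ZFSet)
    (le : ZFSet → ZFSet → Prop) (G : Set ZFSet) : Prop where
  sub : G ⊆ P
  upward : ∀ p ∈ G, ∀ q ∈ P, le p q → q ∈ G
  compat : ∀ p ∈ G, ∀ q ∈ G, ∃ r ∈ G, le r p ∧ le r q
  meets : ∀ D ∈ C, D ⊆ P → DenseIn P le D → (D ∩ G).Nonempty

/-- `G` is `F`-generic over `(M, C)`. -/
def IsGeneric (F : ClassForcing M C) (G : Set ZFSet) : Prop :=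
  IsGenericRaw M C F.P F.le G

/-- The generic extension `M[G] = {σ^G ∣ σ ∈ M^P}` as a class. -/
def MG (M : ZFSet) (P : Set ZFSet) (G : Set ZFSet) : Set ZFSet :=
  {x | ∃ σ, σ ∈ M ∧ IsName P σ ∧ x = val G σ}

/-- `Γ` is a class `P`-name over `(M, C)`. -/
def IsClassName (M : ZFSet) (C : Set (Set ZFSet)) (P : Set ZFSet) (Γ : Set ZFSet) : Prop :=
  Γ ∈ C ∧ ∀ x ∈ Γ, ∃ τ p, τ ∈ M ∧ IsName P τ ∧ p ∈ P ∧ x = ZFSet.pair τ p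

/-- Evaluation `Γ^G` of a class name. -/
def classVal (G : Set ZFSet) (Γ : Set ZFSet) : Set ZFSet :=
  {x | ∃ τ p, p ∈ G ∧ ZFSet.pair τ p ∈ Γ ∧ x = val G τ}

/-- Encoding of a tuple of sets as a single set (iterated Kuratowski pairs). -/
def tupleZF : ∀ {k : ℕ}, (Fin k → ZFSet) → ZFSet
  | 0, _ => ∅
  | _ + 1, v => ZFSet.pair (v 0) (tupleZF (fun i => v i.succ))

/-- `p ⊩ φ(σ⃗)` (with class-name parameters `Γ⃗`): for every `F`-generic filter `G`
over `(M, C)` with `p ∈ G`, `φ(σ⃗^G)` holds in `(M[G], ∈, Γ⃗^G)`. -/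
def Forces (F : ClassForcing M C) {κ n : ℕ} (φ : CFml κ n)
    (Γ : Fin κ → Set ZFSet) (p : ZFSet) (σ : Fin n → ZFSet) : Prop :=
  ∀ G : Set ZFSet, IsGeneric F G → p ∈ G →
    SatC (MG M F.P G) (fun i => classVal G (Γ i)) φ (fun i => val G (σ i))

/-- The definability lemma for `φ` over `(M, C)`: for all class-name parameters,
the class of tuples `⟨p, σ⃗⟩` such that `p ⊩ φ(σ⃗)` is in `C`. -/
def DefLemma (F : ClassForcing M C) {κ n : ℕ} (φ : CFml κ n) : Prop :=
  ∀ Γ : Fin κ → Set ZFSet, (∀ i, IsClassName M C F.P (Γ i)) →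
    {x : ZFSet | ∃ p ∈ F.P, ∃ σ : Fin n → ZFSet,
      (∀ i, σ i ∈ M ∧ IsName F.P (σ i)) ∧ Forces F φ Γ p σ ∧
      x = ZFSet.pair p (tupleZF σ)} ∈ C

/-- The truth lemma for `φ` over `(M, C)`: everything true in a generic extension
is forced by some condition in the generic filter. -/
def TruthLemma (F : ClassForcing M C) {κ n : ℕ} (φ : CFml κ n) : Prop :=
  ∀ Γ : Fin κ → Set ZFSet, (∀ i, IsClassName M C F.P (Γ i)) →
    ∀ σ : Fin n → ZFSet, (∀ i, σ i ∈ M ∧ IsName F.P (σ i)) →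
      ∀ G : Set ZFSet, IsGeneric F G →
        SatC (MG M F.P G) (fun i => classVal G (Γ i)) φ (fun i => val G (σ i)) →
        ∃ p ∈ G, Forces F φ Γ p σ

/-- The forcing theorem for `φ` over `(M, C)`. -/
def ForcingThm (F : ClassForcing M C) {κ n : ℕ} (φ : CFml κ n) : Prop :=
  DefLemma F φ ∧ TruthLemma F φ
/-- `(M, C)` is a countable transitive model of `GB⁻`: Gödel–Bernays set theory
without the power set axiom, stated semantically. The set axioms are those of
`ZF⁻`, with class parameters allowed in Separation and Collection; the class
axioms are extensionality (automatic for collections of sets), foundation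
(automatic) and first-order class comprehension. -/
structure GBminus (M : ZFSet) (C : Set (Set ZFSet)) : Prop where
  countable : M.toSet.Countable
  countableC : C.Countable
  transitive : M.IsTransitive
  classes_sub : ∀ X ∈ C, X ⊆ M.toSet
  empty_mem : (∅ : ZFSet) ∈ M
  pairing : ∀ x ∈ M, ∀ y ∈ M, ({x, y} : ZFSet) ∈ M
  union : ∀ x ∈ M, (ZFSet.sUnion x : ZFSet) ∈ M
  infinity : ZFSet.omega ∈ M
  separation : ∀ (κ m : ℕ) (φ : CFml κ (m + 1)) (Γ : Fin κ → Set ZFSet),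
    (∀ i, Γ i ∈ C) → ∀ (a : Fin m → ZFSet), (∀ i, a i ∈ M) →
    ∀ x ∈ M, ZFSet.sep (fun y => SatC M.toSet Γ φ (Fin.snoc a y)) x ∈ M
  collection : ∀ (κ m : ℕ) (φ : CFml κ (m + 2)) (Γ : Fin κ → Set ZFSet),
    (∀ i, Γ i ∈ C) → ∀ (a : Fin m → ZFSet), (∀ i, a i ∈ M) →
    ∀ x ∈ M, (∀ y ∈ x, ∃ z ∈ M, SatC M.toSet Γ φ (Fin.snoc (Fin.snoc a y) z)) →
      ∃ b ∈ M, ∀ y ∈ x, ∃ z ∈ b, SatC M.toSet Γ φ (Fin.snoc (Fin.snoc a y) z)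
  comprehension : ∀ (κ m : ℕ) (φ : CFml κ (m + 1)) (Γ : Fin κ → Set ZFSet),
    (∀ i, Γ i ∈ C) → ∀ (a : Fin m → ZFSet), (∀ i, a i ∈ M) →
    {y : ZFSet | y ∈ M ∧ SatC M.toSet Γ φ (Fin.snoc a y)} ∈ C

/-!
If `p ⊩ v₀ ∈ v₁` is first-order over `(M, ∈, C)` then so is `p ⊩ σ = τ`: it says that every
`q ≤ p` below the condition `s` of some `⟨ρ, s⟩ ∈ σ` forces `ρ ∈ τ`, and symmetrically.
Conversely, if `p ⊩ v₀ = v₁` is first-order, the conditions `r ≤ s` with `⟨π, s⟩ ∈ τ` and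
`r ⊩ σ = π` form a class in `C`; a density argument, by induction on names, gives the truth
lemma for `σ = τ`, and then `p ⊩ σ ∈ τ` holds exactly when this class is dense below `p`.
Once both atomic relations are first-order, the forcing theorem for every formula of `L^κ`
follows by induction on the formula: in each case `p ⊩ φ(σ⃗)` iff some first-order class of
conditions, each forcing `φ(σ⃗)`, is dense below `p`, and a generic filter meets that class
as soon as `φ(σ⃗)` holds in `M[G]`. Generic filters through any condition exist because `C`
is countable.
-/

/-! ### Definability over `(M, ∈, C)` -/

def CFml.map : ∀ {κ κ' n m : ℕ}, (Fin κ → Fin κ') → (Fin n → Fin m) → CFml κ n → CFml κ' m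
  | _, _, _, _, _, g, .mem i j => .mem (g i) (g j)
  | _, _, _, _, _, g, .eq i j => .eq (g i) (g j)
  | _, _, _, _, f, g, .cls X i => .cls (f X) (g i)
  | _, _, _, _, f, g, .not φ => .not (φ.map f g)
  | _, _, _, _, f, g, .or φ ψ => .or (φ.map f g) (ψ.map f g)
  | _, _, _, _, f, g, .ex φ => .ex (φ.map f (Fin.snoc (Fin.castSucc ∘ g) (Fin.last _)))

theorem satC_map (D : Set ZFSet) {κ κ' n m : ℕ} (f : Fin κ → Fin κ') (g : Fin n → Fin m)
    (φ : CFml κ n) (Γ : Fin κ' → Set ZFSet) (v : Fin m → ZFSet) :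
    SatC D Γ (φ.map f g) v ↔ SatC D (Γ ∘ f) φ (v ∘ g) := by
  induction φ generalizing κ' m with
  | mem i j => simp [CFml.map, SatC]
  | eq i j => simp [CFml.map, SatC]
  | cls X i => simp [CFml.map, SatC]
  | not φ ih => simp [CFml.map, SatC, ih]
  | or φ ψ ihφ ihψ => simp [CFml.map, SatC, ihφ, ihψ]
  | ex φ ih =>
    simp only [CFml.map, SatC, ih, Fin.comp_snoc, ← Function.comp_assoc, Fin.snoc_comp_castSucc,
      Fin.snoc_last]

/-- A relation on `M` is definable over `(M, ∈)` from finitely many classes of `C`; set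
parameters are not needed, since every singleton `{a}` with `a ∈ M` lies in `C`. -/
def Definable (M : ZFSet) (C : Set (Set ZFSet)) {n : ℕ} (S : (Fin n → ZFSet) → Prop) : Prop :=
  ∃ (κ : ℕ) (Γ : Fin κ → Set ZFSet) (φ : CFml κ n), (∀ i, Γ i ∈ C) ∧
    ∀ v : Fin n → ZFSet, (∀ i, v i ∈ M) → (SatC M.toSet Γ φ v ↔ S v)

namespace Definable

variable {n m : ℕ} {S T : (Fin n → ZFSet) → Prop}

theorem congr (h : Definable M C S) (hST : ∀ v, (∀ i, v i ∈ M) → (S v ↔ T v)) :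
    Definable M C T := by
  obtain ⟨κ, Γ, φ, hΓ, hφ⟩ := h
  exact ⟨κ, Γ, φ, hΓ, fun v hv => (hφ v hv).trans (hST v hv)⟩

theorem comp (h : Definable M C S) (g : Fin n → Fin m) : Definable M C (fun v => S (v ∘ g)) := by
  obtain ⟨κ, Γ, φ, hΓ, hφ⟩ := h
  exact ⟨κ, Γ, φ.map id g, hΓ, fun v hv => by rw [satC_map]; exact hφ _ fun i => hv (g i)⟩

theorem not (h : Definable M C S) : Definable M C (fun v => ¬ S v) := by
  obtain ⟨κ, Γ, φ, hΓ, hφ⟩ := h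
  exact ⟨κ, Γ, φ.not, hΓ, fun v hv => by simp only [SatC, hφ v hv]⟩

theorem or (hS : Definable M C S) (hT : Definable M C T) :
    Definable M C (fun v => S v ∨ T v) := by
  obtain ⟨κ, Γ, φ, hΓ, hφ⟩ := hS
  obtain ⟨κ', Γ', ψ, hΓ', hψ⟩ := hT
  refine ⟨κ + κ', Fin.append Γ Γ', (φ.map (Fin.castAdd κ') id).or (ψ.map (Fin.natAdd κ) id),
    Fin.addCases (by simpa using hΓ) (by simpa using hΓ'), fun v hv => ?_⟩
  have hl : Fin.append Γ Γ' ∘ Fin.castAdd κ' = Γ := funext (Fin.append_left Γ Γ')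
  have hr : Fin.append Γ Γ' ∘ Fin.natAdd κ = Γ' := funext (Fin.append_right Γ Γ')
  simp only [SatC, satC_map, hl, hr, Function.comp_id, hφ v hv, hψ v hv]

theorem and (hS : Definable M C S) (hT : Definable M C T) :
    Definable M C (fun v => S v ∧ T v) :=
  (hS.not.or hT.not).not.congr fun _ _ => not_or.trans (by simp only [not_not])

theorem imp (hS : Definable M C S) (hT : Definable M C T) :
    Definable M C (fun v => S v → T v) :=
  (hS.not.or hT).congr fun _ _ => imp_iff_not_or.symm

theorem iff (hS : Definable M C S) (hT : Definable M C T) :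
    Definable M C (fun v => S v ↔ T v) :=
  ((hS.imp hT).and (hT.imp hS)).congr fun _ _ => iff_iff_implies_and_implies.symm

theorem exists_mem {S : (Fin n → ZFSet) → ZFSet → Prop}
    (h : Definable M C (fun w : Fin (n + 1) → ZFSet =>
      S (fun i => w i.castSucc) (w (Fin.last n)))) :
    Definable M C (fun v => ∃ x ∈ M, S v x) := by
  obtain ⟨κ, Γ, φ, hΓ, hφ⟩ := h
  refine ⟨κ, Γ, φ.ex, hΓ, fun v hv => ?_⟩
  simp only [SatC]
  refine exists_congr fun x => and_congr_right fun hx => ?_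
  rw [hφ _ (Fin.lastCases (by rw [Fin.snoc_last]; exact hx) (by simpa using hv) : ∀ i, _)]
  simp

theorem forall_mem {S : (Fin n → ZFSet) → ZFSet → Prop}
    (h : Definable M C (fun w : Fin (n + 1) → ZFSet =>
      S (fun i => w i.castSucc) (w (Fin.last n)))) :
    Definable M C (fun v => ∀ x ∈ M, S v x) :=
  (exists_mem (S := fun v x => ¬ S v x) h.not).not.congr fun _ _ => by simp

end Definable

theorem definable_mem_var {n : ℕ} (i j : Fin n) : Definable M C (fun v => v i ∈ v j) :=
  ⟨0, Fin.elim0, .mem i j, fun i => i.elim0, fun _ _ => by simp only [SatC]⟩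

theorem definable_eq_var {n : ℕ} (i j : Fin n) : Definable M C (fun v => v i = v j) :=
  ⟨0, Fin.elim0, .eq i j, fun i => i.elim0, fun _ _ => by simp only [SatC]⟩

theorem definable_mem_class {n : ℕ} {X : Set ZFSet} (hX : X ∈ C) (i : Fin n) :
    Definable M C (fun v => v i ∈ X) :=
  ⟨1, ![X], .cls 0 i, fun j => by rw [Fin.fin_one_eq_zero j]; exact hX,
    fun _ _ => by simp only [SatC, Matrix.cons_val_fin_one]⟩

theorem Definable.forall_fin {n k : ℕ} {S : Fin k → (Fin n → ZFSet) → Prop}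
    (h : ∀ i, Definable M C (S i)) : Definable M C (fun v => ∀ i, S i v) := by
  induction k with
  | zero =>
    exact (Definable.forall_mem (S := fun _ x => x = x) (definable_eq_var _ _)).congr
      fun _ _ => by simp
  | succ k ih =>
    exact ((h 0).and (ih fun i => h i.succ)).congr fun v _ =>
      (Fin.forall_fin_succ (P := fun i => S i v)).symm

theorem Definable.exists_vec {n k : ℕ} {S : (Fin n → ZFSet) → (Fin k → ZFSet) → Prop}
    (h : Definable M C (fun w : Fin (n + k) → ZFSet =>
      S (fun i => w (Fin.castAdd k i)) (fun j => w (Fin.natAdd n j)))) :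
    Definable M C (fun v => ∃ σ : Fin k → ZFSet, (∀ i, σ i ∈ M) ∧ S v σ) := by
  induction k with
  | zero =>
    refine h.congr fun v _ => ⟨fun hS => ⟨_, fun i => i.elim0, hS⟩, ?_⟩
    rintro ⟨σ, -, hS⟩
    rwa [Subsingleton.elim σ] at hS
  | succ k ih =>
    have hstep := ih (S := fun v σ => ∃ x ∈ M, S v (Fin.snoc σ x)) (Definable.exists_mem
      (h.congr fun w _ => by
        have : (fun j => w (Fin.natAdd n j)) =
            Fin.snoc (fun j => w (Fin.natAdd n j).castSucc) (w (Fin.last (n + k))) := by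
          funext j
          refine Fin.lastCases ?_ (fun j => ?_) j <;> simp
        rw [this]; rfl))
    refine hstep.congr fun v _ => ⟨?_, ?_⟩
    · rintro ⟨σ, hσ, x, hx, hS⟩
      exact ⟨Fin.snoc σ x, Fin.lastCases (by simpa using hx) (by simpa using hσ), hS⟩
    · rintro ⟨σ, hσ, hS⟩
      exact ⟨Fin.init σ, fun i => hσ _, σ (Fin.last k), hσ _, by rwa [Fin.snoc_init_self]⟩

theorem Definable.weaken_penultimate {n : ℕ} {D : (Fin n → ZFSet) → ZFSet → Prop}
    (hD : Definable M C (fun w : Fin (n + 1) → ZFSet =>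
      D (fun i => w i.castSucc) (w (Fin.last n)))) :
    Definable M C (fun w : Fin (n + 2) → ZFSet =>
      D (fun i => w i.castSucc.castSucc) (w (Fin.last (n + 1)))) :=
  (hD.comp (Fin.snoc (Fin.castSucc ∘ Fin.castSucc) (Fin.last _))).congr fun w _ => by simp

def DefinableFun (M : ZFSet) (C : Set (Set ZFSet)) {n : ℕ} (f : (Fin n → ZFSet) → ZFSet) :
    Prop :=
  (∀ v, (∀ i, v i ∈ M) → f v ∈ M) ∧
    Definable M C (fun w : Fin (n + 1) → ZFSet => f (fun i => w i.castSucc) = w (Fin.last n))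

namespace DefinableFun

variable {n m : ℕ} {f g : (Fin n → ZFSet) → ZFSet}

theorem congr (hf : DefinableFun M C f) (hfg : ∀ v, (∀ i, v i ∈ M) → f v = g v) :
    DefinableFun M C g :=
  ⟨fun v hv => hfg v hv ▸ hf.1 v hv,
    hf.2.congr fun w hw => by rw [hfg _ fun i => hw _]⟩

theorem comp (hf : DefinableFun M C f) (g : Fin n → Fin m) :
    DefinableFun M C (fun v => f (v ∘ g)) :=
  ⟨fun v hv => hf.1 _ fun i => hv _,
    (hf.2.comp (Fin.snoc (Fin.castSucc ∘ g) (Fin.last m))).congr fun w _ => by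
      simp only [Function.comp_apply, Fin.snoc_castSucc, Fin.snoc_last]; rfl⟩

end DefinableFun

theorem definableFun_var {n : ℕ} (i : Fin n) : DefinableFun M C (fun v => v i) :=
  ⟨fun _ hv => hv i, definable_eq_var _ _⟩

theorem Definable.subst {n k : ℕ} {S : (Fin k → ZFSet) → Prop} (hS : Definable M C S)
    {f : Fin k → (Fin n → ZFSet) → ZFSet} (hf : ∀ i, DefinableFun M C (f i)) :
    Definable M C (fun v => S (fun i => f i v)) := by
  have hgraph : Definable M C (fun w : Fin (n + k) → ZFSet =>
      (∀ i, f i (fun j => w (Fin.castAdd k j)) = w (Fin.natAdd n i)) ∧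
        S (fun i => w (Fin.natAdd n i))) :=
    (Definable.forall_fin fun i => ((hf i).2.comp (Fin.snoc (Fin.castAdd k) (Fin.natAdd n i))).congr
      fun w _ => by simp only [Function.comp_apply, Fin.snoc_castSucc, Fin.snoc_last]).and
      (hS.comp (Fin.natAdd n))
  refine (Definable.exists_vec (S := fun v σ => (∀ i, f i v = σ i) ∧ S σ) hgraph).congr
    fun v hv => ⟨?_, ?_⟩
  · rintro ⟨σ, -, hfσ, hS⟩
    rwa [show (fun i => f i v) = σ from funext hfσ]
  · exact fun hS => ⟨_, fun i => (hf i).1 v hv, fun _ => rfl, hS⟩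

theorem DefinableFun.subst {n k : ℕ} {f : (Fin k → ZFSet) → ZFSet} (hf : DefinableFun M C f)
    {g : Fin k → (Fin n → ZFSet) → ZFSet} (hg : ∀ i, DefinableFun M C (g i)) :
    DefinableFun M C (fun v => f (fun i => g i v)) := by
  refine ⟨fun v hv => hf.1 _ fun i => (hg i).1 v hv, ?_⟩
  have hgw : ∀ i, DefinableFun M C
      ((Fin.snoc (fun i (w : Fin (n + 1) → ZFSet) => g i (fun j => w j.castSucc))
        (fun w => w (Fin.last n)) : Fin (k + 1) → (Fin (n + 1) → ZFSet) → ZFSet) i) :=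
    Fin.lastCases (by rw [Fin.snoc_last]; exact definableFun_var _)
      (fun i => by rw [Fin.snoc_castSucc]; exact (hg i).comp Fin.castSucc)
  exact (hf.2.subst hgw).congr fun w _ => by simp

theorem DefinableFun.mem {n : ℕ} {f g : (Fin n → ZFSet) → ZFSet} (hf : DefinableFun M C f)
    (hg : DefinableFun M C g) : Definable M C (fun v => f v ∈ g v) :=
  (definable_mem_var (0 : Fin 2) 1).subst (f := ![f, g]) (Fin.forall_fin_two.2 ⟨hf, hg⟩)

theorem DefinableFun.eq {n : ℕ} {f g : (Fin n → ZFSet) → ZFSet} (hf : DefinableFun M C f)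
    (hg : DefinableFun M C g) : Definable M C (fun v => f v = g v) :=
  (definable_eq_var (0 : Fin 2) 1).subst (f := ![f, g]) (Fin.forall_fin_two.2 ⟨hf, hg⟩)

theorem DefinableFun.mem_class {n : ℕ} {f : (Fin n → ZFSet) → ZFSet} (hf : DefinableFun M C f)
    {X : Set ZFSet} (hX : X ∈ C) : Definable M C (fun v => f v ∈ X) :=
  (definable_mem_class hX (0 : Fin 1)).subst (f := ![f]) (Fin.forall_fin_one.2 hf)

theorem GBminus.setOf_mem {n : ℕ} {Q : (Fin n → ZFSet) → ZFSet → Prop} (hMC : GBminus M C)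
    (hQ : Definable M C (fun w : Fin (n + 1) → ZFSet => Q (fun i => w i.castSucc) (w (Fin.last n))))
    {a : Fin n → ZFSet} (ha : ∀ i, a i ∈ M) : {y | y ∈ M ∧ Q a y} ∈ C := by
  obtain ⟨κ, Γ, φ, hΓ, hφ⟩ := hQ
  convert hMC.comprehension κ n φ Γ hΓ a ha using 3 with y
  refine and_congr_right fun hy => ?_
  rw [hφ _ (Fin.lastCases (by rw [Fin.snoc_last]; exact hy) (by simpa using ha))]
  simp

theorem GBminus.setOf_mem₀ {S : ZFSet → Prop} (hMC : GBminus M C)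
    (h : Definable M C (fun v : Fin 1 → ZFSet => S (v 0))) : {y | y ∈ M ∧ S y} ∈ C :=
  hMC.setOf_mem (Q := fun _ y => S y) h (a := Fin.elim0) fun i => i.elim0

theorem GBminus.singleton_mem {a : ZFSet} (hMC : GBminus M C) (ha : a ∈ M) :
    ({a} : Set ZFSet) ∈ C := by
  convert hMC.comprehension 0 1 (.eq 0 1) Fin.elim0 (fun i => i.elim0) ![a]
    (Fin.forall_fin_one.2 ha) using 1
  ext y
  simp only [Set.mem_singleton_iff, Set.mem_ofPred_eq, SatC]
  exact ⟨fun h => ⟨h ▸ ha, h.symm⟩, fun h => h.2.symm⟩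

theorem upair_eq_iff {a b c : ZFSet} (hM : M.IsTransitive) (ha : a ∈ M) (hb : b ∈ M)
    (hc : c ∈ M) : ({a, b} : ZFSet) = c ↔ ∀ y ∈ M, (y ∈ c ↔ y = a ∨ y = b) := by
  refine ⟨fun h y _ => h ▸ ZFSet.mem_pair, fun h => ZFSet.ext fun y => ?_⟩
  rw [ZFSet.mem_pair]
  refine ⟨?_, fun hy => (h y (hM.mem_trans hy hc)).1 hy⟩
  rintro (rfl | rfl)
  exacts [(h _ ha).2 (Or.inl rfl), (h _ hb).2 (Or.inr rfl)]

theorem definableFun_const {n : ℕ} {a : ZFSet} (hMC : GBminus M C) (ha : a ∈ M) :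
    DefinableFun M C (fun _ : Fin n → ZFSet => a) :=
  ⟨fun _ _ => ha, (definable_mem_class (hMC.singleton_mem ha) _).congr fun _ _ => eq_comm⟩

theorem DefinableFun.upair {n : ℕ} {f g : (Fin n → ZFSet) → ZFSet} (hMC : GBminus M C)
    (hf : DefinableFun M C f) (hg : DefinableFun M C g) :
    DefinableFun M C (fun v => ({f v, g v} : ZFSet)) := by
  have hupair : DefinableFun M C (fun x : Fin 2 → ZFSet => ({x 0, x 1} : ZFSet)) :=
    ⟨fun x hx => hMC.pairing _ (hx 0) _ (hx 1),
      (Definable.forall_mem (S := fun w y => y ∈ w 2 ↔ y = w 0 ∨ y = w 1)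
        ((definable_mem_var _ _).iff ((definable_eq_var _ _).or (definable_eq_var _ _)))).congr
        fun w hw => (upair_eq_iff hMC.transitive (hw _) (hw _) (hw _)).symm⟩
  exact hupair.subst (g := ![f, g]) (Fin.forall_fin_two.2 ⟨hf, hg⟩)

theorem DefinableFun.pair {n : ℕ} {f g : (Fin n → ZFSet) → ZFSet} (hMC : GBminus M C)
    (hf : DefinableFun M C f) (hg : DefinableFun M C g) :
    DefinableFun M C (fun v => ZFSet.pair (f v) (g v)) :=
  ((hf.upair hMC hf).upair hMC (hf.upair hMC hg)).congr fun v _ => by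
    rw [ZFSet.pair_eq_singleton]; rfl

theorem definableFun_tupleZF {n k : ℕ} (hMC : GBminus M C) {f : Fin k → (Fin n → ZFSet) → ZFSet}
    (hf : ∀ i, DefinableFun M C (f i)) : DefinableFun M C (fun v => tupleZF (fun i => f i v)) := by
  induction k with
  | zero => exact definableFun_const hMC hMC.empty_mem
  | succ k ih => exact (hf 0).pair hMC (ih fun i => hf i.succ)

theorem DefinableFun.tupleZF₂ {n : ℕ} {f g : (Fin n → ZFSet) → ZFSet} (hMC : GBminus M C)
    (hf : DefinableFun M C f) (hg : DefinableFun M C g) :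
    DefinableFun M C (fun v => tupleZF ![f v, g v]) :=
  hf.pair hMC (hg.pair hMC (definableFun_const hMC hMC.empty_mem))

/-! ### Names and generic filters -/

theorem GBminus.mem_of_mem (hMC : GBminus M C) {a x : ZFSet} (h : a ∈ x) (hx : x ∈ M) : a ∈ M :=
  hMC.transitive.mem_trans h hx

theorem GBminus.mem_of_pair_mem (hMC : GBminus M C) {a b : ZFSet} (h : ZFSet.pair a b ∈ M) :
    a ∈ M ∧ b ∈ M := by
  have hab : ({a, b} : ZFSet) ∈ M := hMC.mem_of_mem (by simp [ZFSet.pair]) h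
  exact ⟨hMC.mem_of_mem (by simp) hab, hMC.mem_of_mem (by simp) hab⟩

theorem GBminus.pair_mem (hMC : GBminus M C) {a b : ZFSet} (ha : a ∈ M) (hb : b ∈ M) :
    ZFSet.pair a b ∈ M := by
  have : ({a} : ZFSet) ∈ M := by simpa using hMC.pairing a ha a ha
  exact hMC.pairing _ this _ (hMC.pairing a ha b hb)

theorem GBminus.tupleZF_mem (hMC : GBminus M C) :
    ∀ {k : ℕ} {v : Fin k → ZFSet}, (∀ i, v i ∈ M) → tupleZF v ∈ M
  | 0, _, _ => hMC.empty_mem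
  | _ + 1, _, hv => hMC.pair_mem (hv 0) (hMC.tupleZF_mem fun i => hv i.succ)

theorem mem_val {G : Set ZFSet} {σ y : ZFSet} :
    y ∈ val G σ ↔ ∃ τ p, p ∈ G ∧ ZFSet.pair τ p ∈ σ ∧ y = val G τ := by
  conv_lhs => rw [val, WellFounded.fix_eq]
  rw [@ZFSet.mem_image _ (Classical.allZFSetDefinable _)]
  constructor
  · rintro ⟨τ, hτ, rfl⟩
    obtain ⟨p, hp, hτp⟩ := (ZFSet.mem_sep.1 hτ).2
    exact ⟨τ, p, hp, hτp, by rw [dif_pos (transGen_mem_of_pair_mem hτp)]; rfl⟩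
  · rintro ⟨τ, p, hp, hτp, rfl⟩
    refine ⟨τ, ZFSet.mem_sep.2 ⟨ZFSet.mem_sUnion.2 ⟨{τ}, ZFSet.mem_sUnion.2
      ⟨_, hτp, by simp [ZFSet.pair]⟩, ZFSet.mem_singleton.2 rfl⟩, p, hp, hτp⟩, ?_⟩
    rw [dif_pos (transGen_mem_of_pair_mem hτp)]
    rfl

theorem val_mem_val {G : Set ZFSet} {σ τ p : ZFSet} (hp : p ∈ G) (h : ZFSet.pair τ p ∈ σ) :
    val G τ ∈ val G σ :=
  mem_val.2 ⟨τ, p, hp, h, rfl⟩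

theorem IsName.of_pair_mem {P : Set ZFSet} {σ τ p : ZFSet} (h : IsName P σ)
    (hτp : ZFSet.pair τ p ∈ σ) : IsName P τ ∧ p ∈ P := by
  obtain ⟨_, hshape, hrec⟩ := h
  obtain ⟨τ', p', hp', he⟩ := hshape _ hτp
  exact ⟨hrec _ _ hτp, (ZFSet.pair_injective he).2 ▸ hp'⟩

theorem isName_singleton {P : Set ZFSet} {σ p : ZFSet} (hσ : IsName P σ) (hp : p ∈ P) :
    IsName P {ZFSet.pair σ p} := by
  refine IsName.intro _ (fun x hx => ⟨σ, p, hp, ZFSet.mem_singleton.1 hx⟩) fun τ q h => ?_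
  obtain ⟨rfl, -⟩ := ZFSet.pair_injective (ZFSet.mem_singleton.1 h)
  exact hσ

theorem tupleZF_injective : ∀ {k : ℕ} {v w : Fin k → ZFSet}, tupleZF v = tupleZF w → v = w
  | 0, _, _, _ => funext fun i => i.elim0
  | _ + 1, _, _, h => by
    obtain ⟨h0, hs⟩ := ZFSet.pair_injective h
    exact funext (Fin.cases h0 (congrFun (tupleZF_injective hs)))

/-- The conditions of `F` with the reverse order, in which Mathlib's order ideals are filters. -/
structure Cond (F : ClassForcing M C) where
  val : ZFSet
  mem : val ∈ F.P

instance (F : ClassForcing M C) : Preorder (Cond F) where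
  le a b := F.le b.val a.val
  le_refl a := F.le_refl _ a.mem
  le_trans a b c hab hbc := F.le_trans _ c.mem _ b.mem _ a.mem hbc hab

/-- Rasiowa–Sikorski, for the countably many dense classes in `C`. -/
theorem exists_generic (hMC : GBminus M C) (F : ClassForcing M C) {p : ZFSet} (hp : p ∈ F.P) :
    ∃ G, IsGeneric F G ∧ p ∈ G := by
  let Ds : Set (Set ZFSet) := {D | D ∈ C ∧ D ⊆ F.P ∧ DenseIn F.P F.le D}
  let _ : Encodable Ds := (hMC.countableC.mono fun D hD => hD.1).toEncodable
  let 𝒟 : Ds → Order.Cofinal (Cond F) := fun D =>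
    ⟨{x | x.val ∈ D.1}, fun x => by
      obtain ⟨q, hqD, hqP, hqx⟩ := D.2.2.2 x.val x.mem
      exact ⟨⟨q, hqP⟩, hqD, hqx⟩⟩
  let I := Order.idealOfCofinals (⟨p, hp⟩ : Cond F) 𝒟
  refine ⟨{x | ∃ h : x ∈ F.P, (⟨x, h⟩ : Cond F) ∈ I}, ⟨fun x hx => hx.1, ?_, ?_, ?_⟩,
    hp, Order.mem_idealOfCofinals (⟨p, hp⟩ : Cond F) 𝒟⟩
  · rintro x ⟨hx, hxI⟩ y hy hxy
    exact ⟨hy, I.lower (show (⟨y, hy⟩ : Cond F) ≤ ⟨x, hx⟩ from hxy) hxI⟩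
  · rintro x ⟨hx, hxI⟩ y ⟨hy, hyI⟩
    obtain ⟨z, hzI, hxz, hyz⟩ := I.directed _ hxI _ hyI
    exact ⟨z.val, ⟨z.mem, hzI⟩, hxz, hyz⟩
  · intro D hD hDP hdense
    obtain ⟨x, hxD, hxI⟩ := Order.cofinal_meets_idealOfCofinals _ 𝒟 ⟨D, hD, hDP, hdense⟩
    exact ⟨x.val, hxD, x.mem, hxI⟩

section

variable {F : ClassForcing M C}

theorem IsGeneric.exists_le {G : Set ZFSet} (hG : IsGeneric F G) {p q : ZFSet} (hp : p ∈ G)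
    (hq : q ∈ G) : ∃ r ∈ G, r ∈ F.P ∧ F.le r p ∧ F.le r q := by
  obtain ⟨r, hr, hrp, hrq⟩ := hG.compat p hp q hq
  exact ⟨r, hr, hG.sub hr, hrp, hrq⟩

theorem IsGeneric.one_mem {G : Set ZFSet} (hG : IsGeneric F G) : F.one ∈ G := by
  obtain ⟨p, hpP, hpG⟩ := hG.meets F.P F.P_mem subset_rfl fun q hq => ⟨q, hq, hq, F.le_refl q hq⟩
  exact hG.upward p hpG _ F.one_mem (F.le_one p hpP)

def ForcesProp (F : ClassForcing M C) (p : ZFSet) (ψ : Set ZFSet → Prop) : Prop :=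
  ∀ G, IsGeneric F G → p ∈ G → ψ G

theorem ForcesProp.mono {p q : ZFSet} {ψ : Set ZFSet → Prop} (h : ForcesProp F p ψ)
    (hp : p ∈ F.P) (hqp : F.le q p) : ForcesProp F q ψ :=
  fun G hG hq => h G hG (hG.upward q hq p hp hqp)

def DenseBelow (F : ClassForcing M C) (D : Set ZFSet) (p : ZFSet) : Prop :=
  ∀ q ∈ F.P, F.le q p → ∃ r ∈ D, r ∈ F.P ∧ F.le r q

def leClass (F : ClassForcing M C) : Set ZFSet :=
  {x | ∃ p ∈ F.P, ∃ q ∈ F.P, F.le p q ∧ x = ZFSet.pair p q}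

theorem pair_mem_leClass {a b : ZFSet} :
    ZFSet.pair a b ∈ leClass F ↔ a ∈ F.P ∧ b ∈ F.P ∧ F.le a b := by
  refine ⟨?_, fun ⟨ha, hb, hab⟩ => ⟨a, ha, b, hb, hab, rfl⟩⟩
  rintro ⟨p, hp, q, hq, hpq, he⟩
  obtain ⟨rfl, rfl⟩ := ZFSet.pair_injective he
  exact ⟨hp, hq, hpq⟩

theorem DefinableFun.le {n : ℕ} {f g : (Fin n → ZFSet) → ZFSet} (hMC : GBminus M C)
    (hf : DefinableFun M C f) (hg : DefinableFun M C g) :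
    Definable M C (fun v => f v ∈ F.P ∧ g v ∈ F.P ∧ F.le (f v) (g v)) :=
  ((hf.pair hMC hg).mem_class (F.le_mem : leClass F ∈ C)).congr fun _ _ => pair_mem_leClass

theorem definable_denseBelow {n : ℕ} (hMC : GBminus M C) {D : (Fin n → ZFSet) → ZFSet → Prop}
    (hD : Definable M C (fun w : Fin (n + 1) → ZFSet => D (fun i => w i.castSucc) (w (Fin.last n))))
    {p : (Fin n → ZFSet) → ZFSet} (hp : DefinableFun M C p) :
    Definable M C (fun v => p v ∈ F.P ∧ DenseBelow F {r | D v r} (p v)) := by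
  have hbody : Definable M C (fun v => p v ∈ F.P ∧ ∀ q ∈ M, (q ∈ F.P ∧ p v ∈ F.P ∧ F.le q (p v)) →
      ∃ r ∈ M, (r ∈ F.P ∧ q ∈ F.P ∧ F.le r q) ∧ D v r) := by
    refine (hp.mem_class F.P_mem).and (Definable.forall_mem ((definableFun_var _).le hMC
      (hp.comp Fin.castSucc) |>.imp (Definable.exists_mem ?_)))
    exact ((definableFun_var _).le hMC (definableFun_var _)).and hD.weaken_penultimate
  refine hbody.congr fun v hv => and_congr_right fun hpP => ?_
  simp only [DenseBelow, Set.mem_ofPred_eq]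
  refine ⟨fun h q hq hqp => ?_, fun h q hqM hqp => ?_⟩
  · obtain ⟨r, hrM, hr, hrD⟩ := h q (F.P_subM q hq) ⟨hq, hpP, hqp⟩
    exact ⟨r, hrD, hr.1, hr.2.2⟩
  · obtain ⟨r, hrD, hrP, hrq⟩ := h q hqp.1 hqp.2.2
    exact ⟨r, F.P_subM r hrP, ⟨hrP, hqp.1, hrq⟩, hrD⟩

theorem IsGeneric.inter_nonempty_of_denseBelow (hMC : GBminus M C) {G : Set ZFSet}
    (hG : IsGeneric F G) {D : Set ZFSet} (hD : D ∈ C) {p : ZFSet} (hpG : p ∈ G)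
    (h : DenseBelow F D p) : (D ∩ G).Nonempty := by
  have hpM : p ∈ M := F.P_subM p (hG.sub hpG)
  -- the conditions that lie in `D` or are incompatible with `p` form a dense class
  have hD'C : {r | r ∈ M ∧ (r ∈ F.P ∧ (r ∈ D ∨ ¬ ∃ u ∈ M,
      (u ∈ F.P ∧ r ∈ F.P ∧ F.le u r) ∧ (u ∈ F.P ∧ p ∈ F.P ∧ F.le u p)))} ∈ C := by
    refine hMC.setOf_mem₀ (((definableFun_var 0).mem_class F.P_mem).and
      (((definableFun_var 0).mem_class hD).or (Definable.not (Definable.exists_mem ?_))))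
    exact ((definableFun_var _).le hMC (definableFun_var _)).and
      ((definableFun_var _).le hMC (definableFun_const hMC hpM))
  obtain ⟨r, ⟨-, -, hr⟩, hrG⟩ := hG.meets _ hD'C (fun r hr => hr.2.1) fun t ht => by
    by_cases hc : ∃ u ∈ F.P, F.le u t ∧ F.le u p
    · obtain ⟨u, hu, hut, hup⟩ := hc
      obtain ⟨r, hrD, hr, hru⟩ := h u hu hup
      exact ⟨r, ⟨F.P_subM r hr, hr, Or.inl hrD⟩, hr, F.le_trans r hr u hu t ht hru hut⟩
    · refine ⟨t, ⟨F.P_subM t ht, ht, Or.inr ?_⟩, ht, F.le_refl t ht⟩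
      rintro ⟨u, -, ⟨hu, -, hut⟩, -, -, hup⟩
      exact hc ⟨u, hu, hut, hup⟩
  refine hr.elim (fun hrD => ⟨r, hrD, hrG⟩) fun hnc => (hnc ?_).elim
  obtain ⟨u, -, hu, hur, hup⟩ := hG.exists_le hrG hpG
  exact ⟨u, F.P_subM u hu, ⟨hu, hG.sub hrG, hur⟩, hu, hG.sub hpG, hup⟩

theorem forcesProp_iff_denseBelow (hMC : GBminus M C) {Q : Set ZFSet} (hQ : Q ∈ C)
    {ψ : Set ZFSet → Prop} (hsound : ∀ r ∈ Q, ForcesProp F r ψ)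
    (hcomplete : ∀ G, IsGeneric F G → ψ G → ∃ r ∈ G, r ∈ Q)
    (hdown : ∀ r ∈ Q, ∀ q ∈ F.P, F.le q r → q ∈ Q) {p : ZFSet} (hp : p ∈ F.P) :
    ForcesProp F p ψ ↔ DenseBelow F Q p := by
  refine ⟨fun h q hq hqp => ?_, fun h G hG hpG => ?_⟩
  · obtain ⟨G, hG, hqG⟩ := exists_generic hMC F hq
    obtain ⟨r, hrG, hrQ⟩ := hcomplete G hG (h G hG (hG.upward q hqG p hp hqp))
    obtain ⟨s, -, hs, hsr, hsq⟩ := hG.exists_le hrG hqG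
    exact ⟨s, hdown r hrQ s hs hsr, hs, hsq⟩
  · obtain ⟨r, hrQ, hrG⟩ := hG.inter_nonempty_of_denseBelow hMC hQ hpG h
    exact hsound r hrQ G hG hrG

/-! ### Forcing classes -/

def nameClass (F : ClassForcing M C) : Set ZFSet := {σ | σ ∈ M ∧ IsName F.P σ}

theorem nameClass_of_pair_mem (hMC : GBminus M C) {σ ρ s : ZFSet} (hσ : σ ∈ nameClass F)
    (h : ZFSet.pair ρ s ∈ σ) : ρ ∈ nameClass F :=
  ⟨(hMC.mem_of_pair_mem (hMC.mem_of_mem h hσ.1)).1, (hσ.2.of_pair_mem h).1⟩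

def Holds (F : ClassForcing M C) (G : Set ZFSet) {κ n : ℕ} (φ : CFml κ n)
    (Γ : Fin κ → Set ZFSet) (σ : Fin n → ZFSet) : Prop :=
  SatC (MG M F.P G) (fun i => classVal G (Γ i)) φ (fun i => val G (σ i))

def forcingClass (F : ClassForcing M C) {κ n : ℕ} (φ : CFml κ n) (Γ : Fin κ → Set ZFSet) :
    Set ZFSet :=
  {x | ∃ p ∈ F.P, ∃ σ : Fin n → ZFSet, (∀ i, σ i ∈ M ∧ IsName F.P (σ i)) ∧
    Forces F φ Γ p σ ∧ x = ZFSet.pair p (tupleZF σ)}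

theorem pair_mem_forcingClass {κ n : ℕ} {φ : CFml κ n} {Γ : Fin κ → Set ZFSet} {p : ZFSet}
    {σ : Fin n → ZFSet} : ZFSet.pair p (tupleZF σ) ∈ forcingClass F φ Γ ↔
      p ∈ F.P ∧ (∀ i, σ i ∈ nameClass F) ∧ ForcesProp F p (fun G => Holds F G φ Γ σ) := by
  refine ⟨?_, fun ⟨hp, hσ, hF⟩ => ⟨p, hp, σ, hσ, hF, rfl⟩⟩
  rintro ⟨p', hp', σ', hσ', hF, he⟩
  obtain ⟨rfl, hσσ'⟩ := ZFSet.pair_injective he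
  obtain rfl := tupleZF_injective hσσ'
  exact ⟨hp', hσ', hF⟩

def memClass (F : ClassForcing M C) : Set ZFSet := forcingClass F (CFml.mem 0 1 : Fml 2) Fin.elim0

def eqClass (F : ClassForcing M C) : Set ZFSet := forcingClass F (CFml.eq 0 1 : Fml 2) Fin.elim0

theorem pair_mem_memClass {p σ τ : ZFSet} : ZFSet.pair p (tupleZF ![σ, τ]) ∈ memClass F ↔
    p ∈ F.P ∧ σ ∈ nameClass F ∧ τ ∈ nameClass F ∧ ForcesProp F p (fun G => val G σ ∈ val G τ) := by
  simp [memClass, pair_mem_forcingClass, Fin.forall_fin_two, Holds, SatC, and_assoc]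

theorem pair_mem_eqClass {p σ τ : ZFSet} : ZFSet.pair p (tupleZF ![σ, τ]) ∈ eqClass F ↔
    p ∈ F.P ∧ σ ∈ nameClass F ∧ τ ∈ nameClass F ∧ ForcesProp F p (fun G => val G σ = val G τ) := by
  simp [eqClass, pair_mem_forcingClass, Fin.forall_fin_two, Holds, SatC, and_assoc]

theorem nameClass_mem_of_eqClass (hMC : GBminus M C) (h : eqClass F ∈ C) : nameClass F ∈ C := by
  have hone : F.one ∈ M := F.P_subM _ F.one_mem
  convert hMC.setOf_mem₀ (S := fun σ => ZFSet.pair F.one (tupleZF ![σ, σ]) ∈ eqClass F)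
    (((definableFun_const hMC hone).pair hMC
      ((definableFun_var 0).tupleZF₂ hMC (definableFun_var 0))).mem_class h) using 1
  ext σ
  exact ⟨fun hσ => ⟨hσ.1, pair_mem_eqClass.2 ⟨F.one_mem, hσ, hσ, fun _ _ _ => rfl⟩⟩,
    fun h => (pair_mem_eqClass.1 h.2).2.1⟩

theorem nameClass_mem_of_memClass (hMC : GBminus M C) (h : memClass F ∈ C) : nameClass F ∈ C := by
  have hone : F.one ∈ M := F.P_subM _ F.one_mem
  convert hMC.setOf_mem₀ (S := fun σ =>
      ZFSet.pair F.one (tupleZF ![σ, {ZFSet.pair σ F.one}]) ∈ memClass F)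
    (((definableFun_const hMC hone).pair hMC ((definableFun_var 0).tupleZF₂ hMC
      ((((definableFun_var 0).pair hMC (definableFun_const hMC hone)).upair hMC
        ((definableFun_var 0).pair hMC (definableFun_const hMC hone))).congr
        fun _ _ => ZFSet.pair_eq_singleton _))).mem_class h) using 1
  ext σ
  refine ⟨fun hσ => ⟨hσ.1, pair_mem_memClass.2 ⟨F.one_mem, hσ,
    ⟨?_, isName_singleton hσ.2 F.one_mem⟩,
    fun G hG _ => val_mem_val hG.one_mem (ZFSet.mem_singleton.2 rfl)⟩⟩,
    fun h => (pair_mem_memClass.1 h.2).2.1⟩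
  simpa using hMC.pairing _ (hMC.pair_mem hσ.1 hone) _ (hMC.pair_mem hσ.1 hone)

theorem forcingClass_mem (hMC : GBminus M C) (hN : nameClass F ∈ C) {κ n : ℕ} {φ : CFml κ n}
    {Γ : Fin κ → Set ZFSet} {R : (Fin n → ZFSet) → ZFSet → Prop}
    (hR : Definable M C (fun w : Fin (n + 1) → ZFSet => R (fun i => w i.castSucc) (w (Fin.last n))))
    (h : ∀ p ∈ F.P, ∀ σ : Fin n → ZFSet, (∀ i, σ i ∈ nameClass F) →
      (ForcesProp F p (fun G => Holds F G φ Γ σ) ↔ R σ p)) :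
    forcingClass F φ Γ ∈ C := by
  suffices {x | x ∈ M ∧ ∃ σ : Fin n → ZFSet, (∀ i, σ i ∈ M) ∧ ∃ p ∈ M,
      x = ZFSet.pair p (tupleZF σ) ∧ p ∈ F.P ∧ (∀ i, σ i ∈ nameClass F) ∧ R σ p} ∈ C by
    convert this using 1
    ext x
    refine ⟨?_, ?_⟩
    · rintro ⟨p, hp, σ, hσ, hF, rfl⟩
      have hpM := F.P_subM p hp
      exact ⟨hMC.pair_mem hpM (hMC.tupleZF_mem fun i => (hσ i).1), σ, fun i => (hσ i).1,
        p, hpM, rfl, hp, hσ, (h p hp σ hσ).1 hF⟩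
    · rintro ⟨-, σ, -, p, -, rfl, hp, hσ, hR⟩
      exact ⟨p, hp, σ, hσ, (h p hp σ hσ).2 hR, rfl⟩
  refine hMC.setOf_mem₀ (Definable.exists_vec (Definable.exists_mem ?_))
  refine ((definableFun_var _).eq ((definableFun_var _).pair hMC
    (definableFun_tupleZF hMC fun i => definableFun_var _))).and
    (((definableFun_var _).mem_class F.P_mem).and
      ((Definable.forall_fin fun i => (definableFun_var _).mem_class hN).and ?_))
  exact (hR.comp (Fin.snoc (fun i => (Fin.natAdd 1 i).castSucc) (Fin.last _))).congr
    fun w _ => by simp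

/-! ### Atomic formulas -/

theorem forcesProp_val_eq_iff {p σ τ : ZFSet} :
    ForcesProp F p (fun G => val G σ = val G τ) ↔
      ForcesProp F p (fun G => val G σ ⊆ val G τ) ∧ ForcesProp F p (fun G => val G τ ⊆ val G σ) :=
  ⟨fun h => ⟨fun G hG hp => (h G hG hp).le, fun G hG hp => (h G hG hp).ge⟩,
    fun h G hG hp => ZFSet.ext fun _ => ⟨@h.1 G hG hp _, @h.2 G hG hp _⟩⟩

theorem forcesProp_val_subset_iff {σ τ p : ZFSet} (hσ : IsName F.P σ) (hp : p ∈ F.P) :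
    ForcesProp F p (fun G => val G σ ⊆ val G τ) ↔ ∀ ρ s, ZFSet.pair ρ s ∈ σ →
      ∀ q ∈ F.P, F.le q p → F.le q s → ForcesProp F q (fun G => val G ρ ∈ val G τ) := by
  refine ⟨fun h ρ s hρs q hq hqp hqs G hG hqG => ?_, fun h G hG hpG x hx => ?_⟩
  · exact h G hG (hG.upward q hqG p hp hqp)
      (val_mem_val (hG.upward q hqG s (hσ.of_pair_mem hρs).2 hqs) hρs)
  · obtain ⟨ρ, s, hsG, hρs, rfl⟩ := mem_val.1 hx
    obtain ⟨q, hqG, hq, hqp, hqs⟩ := hG.exists_le hpG hsG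
    exact h ρ s hρs q hq hqp hqs G hG hqG

/-- `p ⊩ σ ⊆ τ` is first-order over the membership class, by `forcesProp_val_subset_iff`. -/
theorem eqClass_mem_of_memClass (hMC : GBminus M C) (h : memClass F ∈ C) : eqClass F ∈ C := by
  let Sub : (Fin 3 → ZFSet) → Prop := fun v => ∀ ρ ∈ M, ∀ s ∈ M, ZFSet.pair ρ s ∈ v 0 →
    ∀ q ∈ M, (q ∈ F.P ∧ v 2 ∈ F.P ∧ F.le q (v 2)) → (q ∈ F.P ∧ s ∈ F.P ∧ F.le q s) →
      ZFSet.pair q (tupleZF ![ρ, v 1]) ∈ memClass F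
  have hSub : Definable M C Sub := by
    refine Definable.forall_mem (Definable.forall_mem (Definable.imp
      (((definableFun_var _).pair hMC (definableFun_var _)).mem (definableFun_var _))
      (Definable.forall_mem ?_)))
    exact ((definableFun_var _).le hMC (definableFun_var _)).imp
      (((definableFun_var _).le hMC (definableFun_var _)).imp (((definableFun_var _).pair hMC
        ((definableFun_var _).tupleZF₂ hMC (definableFun_var _))).mem_class h))
  have hSub_iff : ∀ σ τ p, σ ∈ nameClass F → τ ∈ nameClass F → p ∈ F.P →
      (Sub ![σ, τ, p] ↔ ForcesProp F p (fun G => val G σ ⊆ val G τ)) := by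
    intro σ τ p hσ hτ hp
    rw [forcesProp_val_subset_iff hσ.2 hp]
    refine ⟨fun hS ρ s hρs q hq hqp hqs => ?_, fun hF ρ hρM s _ hρs q _ hqp hqs => ?_⟩
    · obtain ⟨hρM, hsM⟩ := hMC.mem_of_pair_mem (hMC.mem_of_mem hρs hσ.1)
      exact (pair_mem_memClass.1 (hS ρ hρM s hsM hρs q (F.P_subM q hq) ⟨hq, hp, hqp⟩
        ⟨hq, (hσ.2.of_pair_mem hρs).2, hqs⟩)).2.2.2
    · exact pair_mem_memClass.2 ⟨hqp.1, ⟨hρM, (hσ.2.of_pair_mem hρs).1⟩, hτ,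
        hF ρ s hρs q hqp.1 hqp.2.2 hqs.2.2⟩
  refine forcingClass_mem hMC (nameClass_mem_of_memClass hMC h)
    (R := fun σ p => Sub ![σ 0, σ 1, p] ∧ Sub ![σ 1, σ 0, p])
    ((hSub.congr fun _ _ => Iff.rfl).and ((hSub.comp ![1, 0, 2]).congr fun _ _ => Iff.rfl))
    fun p hp σ hσ => ?_
  rw [hSub_iff _ _ _ (hσ 0) (hσ 1) hp, hSub_iff _ _ _ (hσ 1) (hσ 0) hp]
  simp only [Holds, SatC]
  exact forcesProp_val_eq_iff

def memWitness (F : ClassForcing M C) (Y : Set ZFSet) (ρ : ZFSet) : Set ZFSet :=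
  {r | ∃ π s, ZFSet.pair π s ∈ Y ∧ (r ∈ F.P ∧ s ∈ F.P ∧ F.le r s) ∧
    ZFSet.pair r (tupleZF ![ρ, π]) ∈ eqClass F}

theorem memWitness_subset {Y : Set ZFSet} {ρ : ZFSet} : memWitness F Y ρ ⊆ F.P :=
  fun _ ⟨_, _, _, hr, _⟩ => hr.1

theorem forcesProp_of_mem_memWitness {Y : Set ZFSet} {ρ r : ZFSet} (hr : r ∈ memWitness F Y ρ) :
    ForcesProp F r (fun G => val G ρ ∈ classVal G Y) := by
  obtain ⟨π, s, hπs, ⟨-, hs, hrs⟩, hr⟩ := hr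
  exact fun G hG hrG => ⟨π, s, hG.upward r hrG s hs hrs, hπs,
    (pair_mem_eqClass.1 hr).2.2.2 G hG hrG⟩

theorem memWitness_mono {Y : Set ZFSet} {ρ r q : ZFSet} (hr : r ∈ memWitness F Y ρ)
    (hq : q ∈ F.P) (hqr : F.le q r) : q ∈ memWitness F Y ρ := by
  obtain ⟨π, s, hπs, ⟨hr, hs, hrs⟩, hrX⟩ := hr
  obtain ⟨-, hρ, hπ, hF⟩ := pair_mem_eqClass.1 hrX
  exact ⟨π, s, hπs, ⟨hq, hs, F.le_trans q hq r hr s hs hqr hrs⟩,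
    pair_mem_eqClass.2 ⟨hq, hρ, hπ, hF.mono hr hqr⟩⟩

theorem exists_mem_memWitness {Y : Set ZFSet} {ρ : ZFSet} (hY : ∀ π s, ZFSet.pair π s ∈ Y →
    π ∈ nameClass F) (hρ : ρ ∈ nameClass F) {G : Set ZFSet} (hG : IsGeneric F G)
    (htruth : ∀ π s, ZFSet.pair π s ∈ Y → val G ρ = val G π →
      ∃ q ∈ G, ForcesProp F q (fun G => val G ρ = val G π))
    (h : val G ρ ∈ classVal G Y) : ∃ r ∈ G, r ∈ memWitness F Y ρ := by
  obtain ⟨π, s, hsG, hπs, hρπ⟩ := h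
  obtain ⟨q, hqG, hq⟩ := htruth π s hπs hρπ
  obtain ⟨r, hrG, hr, hrq, hrs⟩ := hG.exists_le hqG hsG
  exact ⟨r, hrG, π, s, hπs, ⟨hr, hG.sub hsG, hrs⟩,
    pair_mem_eqClass.2 ⟨hr, hρ, hY π s hπs, hq.mono (hG.sub hqG) hrq⟩⟩

theorem definable_memWitness (hMC : GBminus M C) (heq : eqClass F ∈ C)
    {Y : ZFSet → Set ZFSet}
    (hY : Definable M C (fun w : Fin 3 → ZFSet => ZFSet.pair (w 1) (w 2) ∈ Y (w 0)))
    (hYM : ∀ t ∈ M, Y t ⊆ M) :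
    Definable M C (fun v : Fin 3 → ZFSet => v 2 ∈ memWitness F (Y (v 0)) (v 1)) := by
  have hdef : Definable M C (fun v : Fin 3 → ZFSet => ∃ π ∈ M, ∃ s ∈ M, ZFSet.pair π s ∈ Y (v 0) ∧
      (v 2 ∈ F.P ∧ s ∈ F.P ∧ F.le (v 2) s) ∧ ZFSet.pair (v 2) (tupleZF ![v 1, π]) ∈ eqClass F) := by
    refine Definable.exists_mem (Definable.exists_mem ?_)
    exact ((hY.comp ![0, 3, 4]).congr fun _ _ => Iff.rfl).and
      (((definableFun_var _).le hMC (definableFun_var _)).and (((definableFun_var _).pair hMC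
        ((definableFun_var _).tupleZF₂ hMC (definableFun_var _))).mem_class heq))
  refine hdef.congr fun v hv => ?_
  refine ⟨fun ⟨π, _, s, _, h⟩ => ⟨π, s, h⟩, fun ⟨π, s, h⟩ => ?_⟩
  obtain ⟨hπ, hs⟩ := hMC.mem_of_pair_mem (hYM _ (hv 0) h.1)
  exact ⟨π, hπ, s, hs, h⟩

theorem definable_memWitness_var (hMC : GBminus M C) (heq : eqClass F ∈ C) {n : ℕ}
    (i j k : Fin n) : Definable M C (fun v => v k ∈ memWitness F (v i) (v j)) :=
  (definable_memWitness hMC heq (Y := fun t => t)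
    ((definableFun_var 1).pair hMC (definableFun_var 2) |>.mem (definableFun_var 0))
    (fun _ ht _ hx => hMC.mem_of_mem hx ht)).comp ![i, j, k]

theorem definable_memWitness_const (hMC : GBminus M C) (heq : eqClass F ∈ C) {n : ℕ} {τ : ZFSet}
    (hτ : τ ∈ M) (j k : Fin n) : Definable M C (fun v => v k ∈ memWitness F τ (v j)) :=
  (definable_memWitness_var hMC heq 0 1 2).subst (f := ![fun _ => τ, fun v => v j, fun v => v k])
    (by intro l; fin_cases l <;> first | exact definableFun_const hMC hτ | exact definableFun_var _)

theorem memWitness_mem (hMC : GBminus M C) (heq : eqClass F ∈ C) {τ ρ : ZFSet} (hτ : τ ∈ M)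
    (hρ : ρ ∈ M) : memWitness F τ ρ ∈ C := by
  convert hMC.setOf_mem (Q := fun a r => r ∈ memWitness F (a 0) (a 1))
    (definable_memWitness_var hMC heq _ _ _) (a := ![τ, ρ]) (Fin.forall_fin_two.2 ⟨hτ, hρ⟩) using 1
  ext r
  exact ⟨fun hr => ⟨F.P_subM r (memWitness_subset hr), hr⟩, And.right⟩

def SubsetWitnessed (F : ClassForcing M C) (σ τ p : ZFSet) : Prop :=
  p ∈ F.P ∧ ∀ ρ s, ZFSet.pair ρ s ∈ σ → ∀ q ∈ F.P, F.le q p → F.le q s →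
    DenseBelow F (memWitness F τ ρ) q

def NotSubsetWitnessed (F : ClassForcing M C) (σ τ p : ZFSet) : Prop :=
  p ∈ F.P ∧ ∃ ρ s, ZFSet.pair ρ s ∈ σ ∧ F.le p s ∧ ∀ q ∈ F.P, F.le q p → q ∉ memWitness F τ ρ

theorem SubsetWitnessed.forcesProp (hMC : GBminus M C) (heq : eqClass F ∈ C) {σ τ p : ZFSet}
    (hσ : σ ∈ nameClass F) (hτ : τ ∈ M) (h : SubsetWitnessed F σ τ p) :
    ForcesProp F p (fun G => val G σ ⊆ val G τ) := by
  intro G hG hpG x hx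
  obtain ⟨ρ, s, hsG, hρs, rfl⟩ := mem_val.1 hx
  obtain ⟨q, hqG, hq, hqp, hqs⟩ := hG.exists_le hpG hsG
  obtain ⟨r, hrW, hrG⟩ := hG.inter_nonempty_of_denseBelow hMC
    (memWitness_mem hMC heq hτ (nameClass_of_pair_mem hMC hσ hρs).1) hqG
    (h.2 ρ s hρs q hq hqp hqs)
  exact mem_val.2 (forcesProp_of_mem_memWitness hrW G hG hrG)

theorem exists_notSubsetWitnessed {σ τ p : ZFSet} (hσ : IsName F.P σ) (hp : p ∈ F.P)
    (h : ¬ SubsetWitnessed F σ τ p) : ∃ q ∈ F.P, F.le q p ∧ NotSubsetWitnessed F σ τ q := by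
  simp only [SubsetWitnessed, hp, true_and, DenseBelow, not_forall, not_exists, not_and] at h
  obtain ⟨ρ, s, hρs, q, hq, hqp, hqs, q', hq', hq'q, hnone⟩ := h
  exact ⟨q', hq', F.le_trans _ hq' _ hq _ hp hq'q hqp, hq', ρ, s, hρs,
    F.le_trans _ hq' _ hq _ (hσ.of_pair_mem hρs).2 hq'q hqs,
    fun r hr hrq' hrW => hnone r hrW hr hrq'⟩

theorem NotSubsetWitnessed.not_subset {σ τ p : ZFSet} (h : NotSubsetWitnessed F σ τ p)
    (hσ : IsName F.P σ) {G : Set ZFSet} (hG : IsGeneric F G) (hpG : p ∈ G)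
    (hcomplete : ∀ ρ s, ZFSet.pair ρ s ∈ σ → val G ρ ∈ val G τ → ∃ r ∈ G, r ∈ memWitness F τ ρ) :
    ¬ val G σ ⊆ val G τ := by
  obtain ⟨hp, ρ, s, hρs, hps, hnone⟩ := h
  intro hsub
  obtain ⟨r, hrG, hrW⟩ := hcomplete ρ s hρs
    (hsub (val_mem_val (hG.upward p hpG s (hσ.of_pair_mem hρs).2 hps) hρs))
  obtain ⟨q, -, hq, hqr, hqp⟩ := hG.exists_le hrG hpG
  exact hnone q hq hqp (memWitness_mono hrW hq hqr)

theorem definable_subsetWitnessed (hMC : GBminus M C) (heq : eqClass F ∈ C) {σ τ : ZFSet}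
    (hσ : σ ∈ nameClass F) (hτ : τ ∈ M) :
    Definable M C (fun v : Fin 1 → ZFSet => SubsetWitnessed F σ τ (v 0)) := by
  have hdef : Definable M C (fun v : Fin 1 → ZFSet => v 0 ∈ F.P ∧ ∀ ρ ∈ M, ∀ s ∈ M,
      ZFSet.pair ρ s ∈ σ → ∀ q ∈ M, (q ∈ F.P ∧ v 0 ∈ F.P ∧ F.le q (v 0)) →
        (q ∈ F.P ∧ s ∈ F.P ∧ F.le q s) → q ∈ F.P ∧ DenseBelow F {r | r ∈ memWitness F τ ρ} q) := by
    refine ((definableFun_var 0).mem_class F.P_mem).and (Definable.forall_mem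
      (Definable.forall_mem (Definable.imp (((definableFun_var _).pair hMC
        (definableFun_var _)).mem (definableFun_const hMC hσ.1)) (Definable.forall_mem ?_))))
    exact ((definableFun_var _).le hMC (definableFun_var _)).imp
      (((definableFun_var _).le hMC (definableFun_var _)).imp (definable_denseBelow hMC
        (definable_memWitness_const hMC heq hτ _ _) (definableFun_var _)))
  refine hdef.congr fun v hv => and_congr_right fun hp => ?_
  refine ⟨fun h ρ s hρs q hq hqp hqs => ?_, fun h ρ _ s _ hρs q _ hqp hqs => ⟨hqp.1, ?_⟩⟩
  · obtain ⟨hρM, hsM⟩ := hMC.mem_of_pair_mem (hMC.mem_of_mem hρs hσ.1)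
    exact (h ρ hρM s hsM hρs q (F.P_subM q hq) ⟨hq, hp, hqp⟩
      ⟨hq, (hσ.2.of_pair_mem hρs).2, hqs⟩).2
  · exact h ρ s hρs q hqp.1 hqp.2.2 hqs.2.2

theorem definable_notSubsetWitnessed (hMC : GBminus M C) (heq : eqClass F ∈ C) {σ τ : ZFSet}
    (hσ : σ ∈ nameClass F) (hτ : τ ∈ M) :
    Definable M C (fun v : Fin 1 → ZFSet => NotSubsetWitnessed F σ τ (v 0)) := by
  have hdef : Definable M C (fun v : Fin 1 → ZFSet => v 0 ∈ F.P ∧ ∃ ρ ∈ M, ∃ s ∈ M,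
      ZFSet.pair ρ s ∈ σ ∧ (v 0 ∈ F.P ∧ s ∈ F.P ∧ F.le (v 0) s) ∧
        ∀ q ∈ M, (q ∈ F.P ∧ v 0 ∈ F.P ∧ F.le q (v 0)) → q ∉ memWitness F τ ρ) := by
    refine ((definableFun_var 0).mem_class F.P_mem).and (Definable.exists_mem
      (Definable.exists_mem ((((definableFun_var _).pair hMC (definableFun_var _)).mem
        (definableFun_const hMC hσ.1)).and (((definableFun_var _).le hMC
          (definableFun_var _)).and (Definable.forall_mem ?_)))))
    exact ((definableFun_var _).le hMC (definableFun_var _)).imp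
      (definable_memWitness_const hMC heq hτ _ _).not
  refine hdef.congr fun v hv => and_congr_right fun hp => ?_
  refine ⟨fun ⟨ρ, _, s, _, hρs, hps, h⟩ => ⟨ρ, s, hρs, hps.2.2, fun q hq hqp => ?_⟩,
    fun ⟨ρ, s, hρs, hps, h⟩ => ?_⟩
  · exact h q (F.P_subM q hq) ⟨hq, hp, hqp⟩
  · obtain ⟨hρM, hsM⟩ := hMC.mem_of_pair_mem (hMC.mem_of_mem hρs hσ.1)
    exact ⟨ρ, hρM, s, hsM, hρs, ⟨hp, (hσ.2.of_pair_mem hρs).2, hps⟩,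
      fun q _ hqp => h q hqp.1 hqp.2.2⟩

def DecidesEq (F : ClassForcing M C) (σ τ p : ZFSet) : Prop :=
  (SubsetWitnessed F σ τ p ∧ SubsetWitnessed F τ σ p) ∨
    NotSubsetWitnessed F σ τ p ∨ NotSubsetWitnessed F τ σ p

theorem DecidesEq.mem {σ τ p : ZFSet} (h : DecidesEq F σ τ p) : p ∈ F.P :=
  h.elim (·.1.1) (·.elim (·.1) (·.1))

theorem setOf_decidesEq_mem (hMC : GBminus M C) (heq : eqClass F ∈ C) {σ τ : ZFSet}
    (hσ : σ ∈ nameClass F) (hτ : τ ∈ nameClass F) : {p | p ∈ M ∧ DecidesEq F σ τ p} ∈ C :=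
  hMC.setOf_mem₀ (((definable_subsetWitnessed hMC heq hσ hτ.1).and
    (definable_subsetWitnessed hMC heq hτ hσ.1)).or
    ((definable_notSubsetWitnessed hMC heq hσ hτ.1).or
      (definable_notSubsetWitnessed hMC heq hτ hσ.1)))

theorem denseIn_decidesEq {σ τ : ZFSet} (hσ : IsName F.P σ) (hτ : IsName F.P τ) :
    DenseIn F.P F.le {p | p ∈ M ∧ DecidesEq F σ τ p} := by
  intro p hp
  by_cases h1 : SubsetWitnessed F σ τ p
  · by_cases h2 : SubsetWitnessed F τ σ p
    · exact ⟨p, ⟨F.P_subM p hp, Or.inl ⟨h1, h2⟩⟩, hp, F.le_refl p hp⟩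
    · obtain ⟨q, hq, hqp, h⟩ := exists_notSubsetWitnessed hτ hp h2
      exact ⟨q, ⟨F.P_subM q hq, Or.inr (Or.inr h)⟩, hq, hqp⟩
  · obtain ⟨q, hq, hqp, h⟩ := exists_notSubsetWitnessed hσ hp h1
    exact ⟨q, ⟨F.P_subM q hq, Or.inr (Or.inl h)⟩, hq, hqp⟩

/-- The truth lemma for `σ = τ`, by induction on `σ`: a generic filter contains a condition
deciding `σ = τ`, and by the induction hypothesis a witnessed difference would be visible
in `M[G]`. -/
theorem exists_forcesProp_val_eq (hMC : GBminus M C) (heq : eqClass F ∈ C) (σ : ZFSet) :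
    ∀ τ, σ ∈ nameClass F → τ ∈ nameClass F → ∀ G, IsGeneric F G → val G σ = val G τ →
      ∃ p ∈ G, ForcesProp F p (fun G => val G σ = val G τ) := by
  induction σ using ZFSet.mem_wf.transGen.induction with
  | _ σ ih =>
  intro τ hσ hτ G hG hστ
  obtain ⟨p, ⟨-, hp⟩, hpG⟩ := hG.meets _ (setOf_decidesEq_mem hMC heq hσ hτ)
    (fun p hp => hp.2.mem) (denseIn_decidesEq hσ.2 hτ.2)
  rcases hp with ⟨h1, h2⟩ | h | h
  · exact ⟨p, hpG, forcesProp_val_eq_iff.2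
      ⟨h1.forcesProp hMC heq hσ hτ.1, h2.forcesProp hMC heq hτ hσ.1⟩⟩
  · refine absurd (hστ ▸ subset_rfl) (h.not_subset hσ.2 hG hpG fun ρ s hρs hρ => ?_)
    have hρN := nameClass_of_pair_mem hMC hσ hρs
    exact exists_mem_memWitness (fun π t => nameClass_of_pair_mem hMC hτ) hρN hG
      (fun π _ hπt => ih ρ (transGen_mem_of_pair_mem hρs) π hρN
        (nameClass_of_pair_mem hMC hτ hπt) G hG) (mem_val.1 hρ)
  · refine absurd (hστ ▸ subset_rfl) (h.not_subset hτ.2 hG hpG fun ρ s hρs hρ => ?_)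
    have hρN := nameClass_of_pair_mem hMC hτ hρs
    refine exists_mem_memWitness (fun π t => nameClass_of_pair_mem hMC hσ) hρN hG
      (fun π _ hπt hρπ => ?_) (mem_val.1 hρ)
    obtain ⟨q, hqG, hq⟩ := ih π (transGen_mem_of_pair_mem hπt) ρ
      (nameClass_of_pair_mem hMC hσ hπt) hρN G hG hρπ.symm
    exact ⟨q, hqG, fun G hG hqG => (hq G hG hqG).symm⟩

theorem exists_mem_memWitness_of_val_mem (hMC : GBminus M C) (heq : eqClass F ∈ C)
    {σ τ : ZFSet} (hσ : σ ∈ nameClass F) (hτ : τ ∈ nameClass F) {G : Set ZFSet}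
    (hG : IsGeneric F G) (h : val G σ ∈ val G τ) : ∃ r ∈ G, r ∈ memWitness F τ σ :=
  exists_mem_memWitness (fun _ _ => nameClass_of_pair_mem hMC hτ) hσ hG
    (fun π _ hπ => exists_forcesProp_val_eq hMC heq σ π hσ (nameClass_of_pair_mem hMC hτ hπ) G hG)
    (mem_val.1 h)

theorem exists_forcesProp_val_mem (hMC : GBminus M C) (heq : eqClass F ∈ C) {σ τ : ZFSet}
    (hσ : σ ∈ nameClass F) (hτ : τ ∈ nameClass F) {G : Set ZFSet} (hG : IsGeneric F G)
    (h : val G σ ∈ val G τ) : ∃ p ∈ G, ForcesProp F p (fun G => val G σ ∈ val G τ) := by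
  obtain ⟨r, hrG, hrW⟩ := exists_mem_memWitness_of_val_mem hMC heq hσ hτ hG h
  exact ⟨r, hrG, fun G hG hrG => mem_val.2 (forcesProp_of_mem_memWitness hrW G hG hrG)⟩

theorem memClass_mem_of_eqClass (hMC : GBminus M C) (heq : eqClass F ∈ C) : memClass F ∈ C := by
  refine forcingClass_mem hMC (nameClass_mem_of_eqClass hMC heq)
    (R := fun σ p => p ∈ F.P ∧ DenseBelow F {r | r ∈ memWitness F (σ 1) (σ 0)} p)
    (definable_denseBelow hMC (definable_memWitness_var hMC heq _ _ _) (definableFun_var _))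
    fun p hp σ hσ => ?_
  simp only [Holds, SatC, Set.ofPred_mem_eq, hp, true_and]
  exact forcesProp_iff_denseBelow hMC (memWitness_mem hMC heq (hσ 1).1 (hσ 0).1)
    (fun r hr G hG hrG => mem_val.2 (forcesProp_of_mem_memWitness hr G hG hrG))
    (fun G hG => exists_mem_memWitness_of_val_mem hMC heq (hσ 0) (hσ 1) hG)
    (fun r hr q hq hqr => memWitness_mono hr hq hqr) hp

/-! ### All formulas -/

theorem holds_mem {G : Set ZFSet} {κ n : ℕ} {Γ : Fin κ → Set ZFSet} {σ : Fin n → ZFSet}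
    (i j : Fin n) : Holds F G (.mem i j) Γ σ ↔ val G (σ i) ∈ val G (σ j) := by
  simp [Holds, SatC]

theorem holds_eq {G : Set ZFSet} {κ n : ℕ} {Γ : Fin κ → Set ZFSet} {σ : Fin n → ZFSet}
    (i j : Fin n) : Holds F G (.eq i j) Γ σ ↔ val G (σ i) = val G (σ j) := by
  simp [Holds, SatC]

theorem holds_cls {G : Set ZFSet} {κ n : ℕ} {Γ : Fin κ → Set ZFSet} {σ : Fin n → ZFSet}
    (X : Fin κ) (i : Fin n) : Holds F G (.cls X i) Γ σ ↔ val G (σ i) ∈ classVal G (Γ X) := by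
  simp [Holds, SatC]

theorem holds_not {G : Set ZFSet} {κ n : ℕ} {Γ : Fin κ → Set ZFSet} {σ : Fin n → ZFSet}
    (φ : CFml κ n) : Holds F G φ.not Γ σ ↔ ¬ Holds F G φ Γ σ := by
  simp [Holds, SatC]

theorem holds_or {G : Set ZFSet} {κ n : ℕ} {Γ : Fin κ → Set ZFSet} {σ : Fin n → ZFSet}
    (φ ψ : CFml κ n) : Holds F G (φ.or ψ) Γ σ ↔ Holds F G φ Γ σ ∨ Holds F G ψ Γ σ := by
  simp [Holds, SatC]

theorem holds_ex {G : Set ZFSet} {κ n : ℕ} {Γ : Fin κ → Set ZFSet} {σ : Fin n → ZFSet}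
    (φ : CFml κ (n + 1)) :
    Holds F G φ.ex Γ σ ↔ ∃ μ ∈ nameClass F, Holds F G φ Γ (Fin.snoc σ μ) := by
  have hsnoc : ∀ μ, (fun i => val G ((Fin.snoc σ μ : Fin (n + 1) → ZFSet) i)) =
      Fin.snoc (fun i => val G (σ i)) (val G μ) := fun μ => Fin.comp_snoc (val G) σ μ
  simp only [Holds, SatC, hsnoc, MG]
  exact ⟨fun ⟨_, ⟨μ, hμM, hμ, rfl⟩, h⟩ => ⟨μ, ⟨hμM, hμ⟩, h⟩,
    fun ⟨μ, hμ, h⟩ => ⟨_, ⟨μ, hμ.1, hμ.2, rfl⟩, h⟩⟩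

def ForcingThmAt (F : ClassForcing M C) {κ n : ℕ} (φ : CFml κ n) (Γ : Fin κ → Set ZFSet) : Prop :=
  forcingClass F φ Γ ∈ C ∧ ∀ σ : Fin n → ZFSet, (∀ i, σ i ∈ nameClass F) → ∀ G, IsGeneric F G →
    Holds F G φ Γ σ → ∃ p ∈ G, ForcesProp F p (fun G => Holds F G φ Γ σ)

/-- `p ⊩ φ(σ⃗)` iff `Q σ` is dense below `p`, and this is first-order in `p` and `σ⃗`. -/
theorem forcingThmAt_of_witnesses (hMC : GBminus M C) (hN : nameClass F ∈ C) {κ n : ℕ}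
    {φ : CFml κ n} {Γ : Fin κ → Set ZFSet} (Q : (Fin n → ZFSet) → ZFSet → Prop)
    (hQ : Definable M C (fun w : Fin (n + 1) → ZFSet => Q (fun i => w i.castSucc) (w (Fin.last n))))
    (hQP : ∀ σ r, Q σ r → r ∈ F.P) (hmono : ∀ σ r q, Q σ r → q ∈ F.P → F.le q r → Q σ q)
    (hsound : ∀ σ, (∀ i, σ i ∈ nameClass F) → ∀ r, Q σ r →
      ForcesProp F r (fun G => Holds F G φ Γ σ))
    (hcomplete : ∀ σ, (∀ i, σ i ∈ nameClass F) → ∀ G, IsGeneric F G → Holds F G φ Γ σ →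
      ∃ r ∈ G, Q σ r) :
    ForcingThmAt F φ Γ := by
  refine ⟨forcingClass_mem hMC hN (R := fun σ p => p ∈ F.P ∧ DenseBelow F {r | Q σ r} p)
    (definable_denseBelow hMC (D := fun u r => Q (fun i => u i.castSucc) r) hQ.weaken_penultimate
      (definableFun_var _)) fun p hp σ hσ => ?_,
    fun σ hσ G hG h => ?_⟩
  · have hQC : {r | Q σ r} ∈ C := by
      convert hMC.setOf_mem hQ fun i => (hσ i).1 using 1
      ext r
      exact ⟨fun h => ⟨F.P_subM r (hQP σ r h), h⟩, And.right⟩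
    rw [and_iff_right hp]
    exact forcesProp_iff_denseBelow hMC hQC (hsound σ hσ) (hcomplete σ hσ)
      (fun r hr q hq hqr => hmono σ r q hr hq hqr) hp
  · obtain ⟨r, hrG, hr⟩ := hcomplete σ hσ G hG h
    exact ⟨r, hrG, hsound σ hσ r hr⟩

theorem forcingThmAt_mem (hMC : GBminus M C) (hmem : memClass F ∈ C) (heq : eqClass F ∈ C)
    {κ n : ℕ} {Γ : Fin κ → Set ZFSet} (i j : Fin n) : ForcingThmAt F (.mem i j) Γ := by
  refine forcingThmAt_of_witnesses hMC (nameClass_mem_of_eqClass hMC heq)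
    (fun σ r => ZFSet.pair r (tupleZF ![σ i, σ j]) ∈ memClass F)
    (((definableFun_var _).pair hMC ((definableFun_var _).tupleZF₂ hMC
      (definableFun_var _))).mem_class hmem)
    (fun σ r h => (pair_mem_memClass.1 h).1) (fun σ r q h hq hqr => ?_) (fun σ _ r h => ?_)
    fun σ hσ G hG h => ?_
  · obtain ⟨hr, hi, hj, hF⟩ := pair_mem_memClass.1 h
    exact pair_mem_memClass.2 ⟨hq, hi, hj, hF.mono hr hqr⟩
  · simpa only [holds_mem] using (pair_mem_memClass.1 h).2.2.2
  · obtain ⟨p, hpG, hp⟩ := exists_forcesProp_val_mem hMC heq (hσ i) (hσ j) hG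
      ((holds_mem i j).1 h)
    exact ⟨p, hpG, pair_mem_memClass.2 ⟨hG.sub hpG, hσ i, hσ j, hp⟩⟩

theorem forcingThmAt_eq (hMC : GBminus M C) (heq : eqClass F ∈ C) {κ n : ℕ}
    {Γ : Fin κ → Set ZFSet} (i j : Fin n) : ForcingThmAt F (.eq i j) Γ := by
  refine forcingThmAt_of_witnesses hMC (nameClass_mem_of_eqClass hMC heq)
    (fun σ r => ZFSet.pair r (tupleZF ![σ i, σ j]) ∈ eqClass F)
    (((definableFun_var _).pair hMC ((definableFun_var _).tupleZF₂ hMC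
      (definableFun_var _))).mem_class heq)
    (fun σ r h => (pair_mem_eqClass.1 h).1) (fun σ r q h hq hqr => ?_) (fun σ _ r h => ?_)
    fun σ hσ G hG h => ?_
  · obtain ⟨hr, hi, hj, hF⟩ := pair_mem_eqClass.1 h
    exact pair_mem_eqClass.2 ⟨hq, hi, hj, hF.mono hr hqr⟩
  · simpa only [holds_eq] using (pair_mem_eqClass.1 h).2.2.2
  · obtain ⟨p, hpG, hp⟩ := exists_forcesProp_val_eq hMC heq _ _ (hσ i) (hσ j) G hG
      ((holds_eq i j).1 h)
    exact ⟨p, hpG, pair_mem_eqClass.2 ⟨hG.sub hpG, hσ i, hσ j, hp⟩⟩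

theorem forcingThmAt_cls (hMC : GBminus M C) (heq : eqClass F ∈ C) {κ n : ℕ}
    {Γ : Fin κ → Set ZFSet} (hΓ : ∀ X, IsClassName M C F.P (Γ X)) (X : Fin κ) (i : Fin n) :
    ForcingThmAt F (.cls X i) Γ := by
  have hY : ∀ π s, ZFSet.pair π s ∈ Γ X → π ∈ nameClass F := fun π s h => by
    obtain ⟨τ, p, hτM, hτ, -, he⟩ := (hΓ X).2 _ h
    obtain ⟨rfl, -⟩ := ZFSet.pair_injective he
    exact ⟨hτM, hτ⟩
  have hW : Definable M C (fun w : Fin (n + 1) → ZFSet =>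
      w (Fin.last n) ∈ memWitness F (Γ X) (w (Fin.castSucc i))) :=
    (definable_memWitness hMC heq (Y := fun _ => Γ X)
      (((definableFun_var 1).pair hMC (definableFun_var 2)).mem_class (hΓ X).1)
      fun _ _ => hMC.classes_sub _ (hΓ X).1).comp ![i.castSucc, i.castSucc, Fin.last n]
  refine forcingThmAt_of_witnesses hMC (nameClass_mem_of_eqClass hMC heq)
    (fun σ r => r ∈ memWitness F (Γ X) (σ i)) hW (fun σ r h => memWitness_subset h)
    (fun σ r q h hq hqr => memWitness_mono h hq hqr) (fun σ _ r h => ?_) fun σ hσ G hG h => ?_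
  · simpa only [holds_cls] using forcesProp_of_mem_memWitness h
  · exact exists_mem_memWitness hY (hσ i) hG
      (fun π s hπs => exists_forcesProp_val_eq hMC heq _ _ (hσ i) (hY π s hπs) G hG)
      ((holds_cls X i).1 h)

theorem ForcingThmAt.or (hMC : GBminus M C) (hN : nameClass F ∈ C) {κ n : ℕ}
    {Γ : Fin κ → Set ZFSet} {φ ψ : CFml κ n} (hφ : ForcingThmAt F φ Γ)
    (hψ : ForcingThmAt F ψ Γ) : ForcingThmAt F (φ.or ψ) Γ := by
  have htuple : DefinableFun M C (fun w : Fin (n + 1) → ZFSet =>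
      ZFSet.pair (w (Fin.last n)) (tupleZF fun i => w i.castSucc)) :=
    (definableFun_var _).pair hMC (definableFun_tupleZF hMC fun _ => definableFun_var _)
  refine forcingThmAt_of_witnesses hMC hN
    (fun σ r => ZFSet.pair r (tupleZF σ) ∈ forcingClass F φ Γ ∨
      ZFSet.pair r (tupleZF σ) ∈ forcingClass F ψ Γ)
    ((htuple.mem_class hφ.1).or (htuple.mem_class hψ.1))
    (fun σ r h => h.elim (pair_mem_forcingClass.1 · |>.1) (pair_mem_forcingClass.1 · |>.1))
    (fun σ r q h hq hqr => ?_) (fun σ _ r h G hG hrG => ?_) fun σ hσ G hG h => ?_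
  · refine h.imp (fun h => ?_) fun h => ?_ <;>
    · obtain ⟨hr, hσ, hF⟩ := pair_mem_forcingClass.1 h
      exact pair_mem_forcingClass.2 ⟨hq, hσ, hF.mono hr hqr⟩
  · refine (holds_or φ ψ).2 (h.imp (fun h => (pair_mem_forcingClass.1 h).2.2 G hG hrG)
      fun h => (pair_mem_forcingClass.1 h).2.2 G hG hrG)
  · rcases (holds_or φ ψ).1 h with h | h
    · obtain ⟨p, hpG, hp⟩ := hφ.2 σ hσ G hG h
      exact ⟨p, hpG, Or.inl (pair_mem_forcingClass.2 ⟨hG.sub hpG, hσ, hp⟩)⟩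
    · obtain ⟨p, hpG, hp⟩ := hψ.2 σ hσ G hG h
      exact ⟨p, hpG, Or.inr (pair_mem_forcingClass.2 ⟨hG.sub hpG, hσ, hp⟩)⟩

theorem ForcingThmAt.ex (hMC : GBminus M C) (hN : nameClass F ∈ C) {κ n : ℕ}
    {Γ : Fin κ → Set ZFSet} {φ : CFml κ (n + 1)} (hφ : ForcingThmAt F φ Γ) :
    ForcingThmAt F φ.ex Γ := by
  have hdef : Definable M C (fun w : Fin (n + 1) → ZFSet => ∃ μ ∈ M, μ ∈ nameClass F ∧
      ZFSet.pair (w (Fin.last n)) (tupleZF (Fin.snoc (fun i => w i.castSucc) μ)) ∈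
        forcingClass F φ Γ) := by
    refine Definable.exists_mem (((definableFun_var _).mem_class hN).and
      (((definableFun_var _).pair hMC (definableFun_tupleZF hMC fun i => ?_)).mem_class hφ.1))
    refine Fin.lastCases ?_ (fun i => ?_) i
    · simpa only [Fin.snoc_last] using definableFun_var _
    · simpa only [Fin.snoc_castSucc] using definableFun_var _
  refine forcingThmAt_of_witnesses hMC hN (fun σ r => ∃ μ ∈ M, μ ∈ nameClass F ∧
      ZFSet.pair r (tupleZF (Fin.snoc σ μ)) ∈ forcingClass F φ Γ) hdef
    (fun σ r ⟨μ, _, _, h⟩ => (pair_mem_forcingClass.1 h).1)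
    (fun σ r q ⟨μ, hμM, hμ, h⟩ hq hqr => ?_) (fun σ _ r ⟨μ, _, hμ, h⟩ G hG hrG => ?_)
    fun σ hσ G hG h => ?_
  · obtain ⟨hr, hσ, hF⟩ := pair_mem_forcingClass.1 h
    exact ⟨μ, hμM, hμ, pair_mem_forcingClass.2 ⟨hq, hσ, hF.mono hr hqr⟩⟩
  · exact (holds_ex φ).2 ⟨μ, hμ, (pair_mem_forcingClass.1 h).2.2 G hG hrG⟩
  · obtain ⟨μ, hμ, h⟩ := (holds_ex φ).1 h
    have hσμ : ∀ i, (Fin.snoc σ μ : Fin (n + 1) → ZFSet) i ∈ nameClass F :=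
      Fin.lastCases (by simpa using hμ) (by simpa using hσ)
    obtain ⟨p, hpG, hp⟩ := hφ.2 _ hσμ G hG h
    exact ⟨p, hpG, μ, hμ.1, hμ, pair_mem_forcingClass.2 ⟨hG.sub hpG, hσμ, hp⟩⟩

/-- For the truth lemma of `¬φ`: a generic filter meets the dense class of conditions that
force `φ(σ⃗)` or have no extension forcing it. -/
theorem ForcingThmAt.not (hMC : GBminus M C) (hN : nameClass F ∈ C) {κ n : ℕ}
    {Γ : Fin κ → Set ZFSet} {φ : CFml κ n} (hφ : ForcingThmAt F φ Γ) :
    ForcingThmAt F φ.not Γ := by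
  let Q : (Fin n → ZFSet) → ZFSet → Prop := fun σ r =>
    r ∈ F.P ∧ ∀ q ∈ F.P, F.le q r → ZFSet.pair q (tupleZF σ) ∉ forcingClass F φ Γ
  have hdef : Definable M C (fun w : Fin (n + 1) → ZFSet => w (Fin.last n) ∈ F.P ∧
      ∀ q ∈ M, (q ∈ F.P ∧ w (Fin.last n) ∈ F.P ∧ F.le q (w (Fin.last n))) →
        ZFSet.pair q (tupleZF fun i => w i.castSucc) ∉ forcingClass F φ Γ) := by
    refine ((definableFun_var _).mem_class F.P_mem).and (Definable.forall_mem ?_)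
    exact ((definableFun_var _).le hMC (definableFun_var _)).imp (((definableFun_var _).pair hMC
      (definableFun_tupleZF hMC fun _ => definableFun_var _)).mem_class hφ.1).not
  have hQ : Definable M C (fun w : Fin (n + 1) → ZFSet =>
      Q (fun i => w i.castSucc) (w (Fin.last n))) :=
    hdef.congr fun w _ => and_congr_right fun hr => ⟨fun h q hq hqr => h q (F.P_subM q hq)
      ⟨hq, hr, hqr⟩, fun h q _ hqr => h q hqr.1 hqr.2.2⟩
  refine forcingThmAt_of_witnesses hMC hN Q hQ (fun σ r h => h.1)
    (fun σ r q h hq hqr =>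
      ⟨hq, fun q' hq' hq'q => h.2 q' hq' (F.le_trans _ hq' _ hq _ h.1 hq'q hqr)⟩)
    (fun σ hσ r h G hG hrG => (holds_not φ).2 fun hφG => ?_) fun σ hσ G hG h => ?_
  · obtain ⟨p, hpG, hp⟩ := hφ.2 σ hσ G hG hφG
    obtain ⟨q, -, hq, hqp, hqr⟩ := hG.exists_le hpG hrG
    exact h.2 q hq hqr (pair_mem_forcingClass.2 ⟨hq, hσ, hp.mono (hG.sub hpG) hqp⟩)
  · have hD : {r | r ∈ M ∧ (ZFSet.pair r (tupleZF σ) ∈ forcingClass F φ Γ ∨ Q σ r)} ∈ C :=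
      hMC.setOf_mem (Q := fun σ r => ZFSet.pair r (tupleZF σ) ∈ forcingClass F φ Γ ∨ Q σ r)
        (((definableFun_var _).pair hMC (definableFun_tupleZF hMC
        fun _ => definableFun_var _)).mem_class hφ.1 |>.or hQ) fun i => (hσ i).1
    obtain ⟨r, ⟨-, hr⟩, hrG⟩ := hG.meets _ hD
      (fun r hr => hr.2.elim (pair_mem_forcingClass.1 · |>.1) (·.1)) fun p hp => by
        by_cases hex : ∃ q ∈ F.P, F.le q p ∧ ZFSet.pair q (tupleZF σ) ∈ forcingClass F φ Γ
        · obtain ⟨q, hq, hqp, hqX⟩ := hex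
          exact ⟨q, ⟨F.P_subM q hq, Or.inl hqX⟩, hq, hqp⟩
        · simp only [not_exists, not_and] at hex
          exact ⟨p, ⟨F.P_subM p hp, Or.inr ⟨hp, hex⟩⟩, hp, F.le_refl p hp⟩
    exact ⟨r, hrG, hr.resolve_left fun hrX =>
      (holds_not φ).1 h ((pair_mem_forcingClass.1 hrX).2.2 G hG hrG)⟩

theorem forcingThmAt_of_atomic (hMC : GBminus M C) (hmem : memClass F ∈ C) (heq : eqClass F ∈ C)
    {κ n : ℕ} {Γ : Fin κ → Set ZFSet} (hΓ : ∀ X, IsClassName M C F.P (Γ X)) (φ : CFml κ n) :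
    ForcingThmAt F φ Γ := by
  have hN := nameClass_mem_of_eqClass hMC heq
  induction φ with
  | mem i j => exact forcingThmAt_mem hMC hmem heq i j
  | eq i j => exact forcingThmAt_eq hMC heq i j
  | cls X i => exact forcingThmAt_cls hMC heq hΓ X i
  | not φ ih => exact ih.not hMC hN
  | or φ ψ ihφ ihψ => exact ihφ.or hMC hN ihψ
  | ex φ ih => exact ih.ex hMC hN

end

/-- Let `(M, C)` be a countable transitive model of `GB⁻` and
`ℙ` a notion of class forcing for `(M, C)`. If `ℙ` satisfies the definability
lemma for `v₀ ∈ v₁` or for `v₀ = v₁`, then `ℙ` satisfies the forcing theorem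
for all atomic ∈-formulae and, in fact, for every formula of every language
`L^κ` (with `κ` unary predicates interpreted by evaluations of class names). -/
theorem statement10 (M : ZFSet) (C : Set (Set ZFSet)) (hMC : GBminus M C)
    (F : ClassForcing M C)
    (h : DefLemma F (CFml.mem 0 1 : Fml 2) ∨ DefLemma F (CFml.eq 0 1 : Fml 2)) :
    (ForcingThm F (CFml.mem 0 1 : Fml 2) ∧ ForcingThm F (CFml.eq 0 1 : Fml 2)) ∧
    ∀ (κ n : ℕ) (φ : CFml κ n), ForcingThm F φ := by
  obtain ⟨hmem, heq⟩ : memClass F ∈ C ∧ eqClass F ∈ C := by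
    rcases h with h | h
    · have hmem : memClass F ∈ C := h _ fun i => i.elim0
      exact ⟨hmem, eqClass_mem_of_memClass hMC hmem⟩
    · have heq : eqClass F ∈ C := h _ fun i => i.elim0
      exact ⟨memClass_mem_of_eqClass hMC heq, heq⟩
  have hall : ∀ (κ n : ℕ) (φ : CFml κ n), ForcingThm F φ := fun κ n φ =>
    ⟨fun Γ hΓ => (forcingThmAt_of_atomic hMC hmem heq hΓ φ).1,
      fun Γ hΓ => (forcingThmAt_of_atomic hMC hmem heq hΓ φ).2⟩
  exact ⟨⟨hall 0 2 _, hall 0 2 _⟩, hall⟩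

end CF
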